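/- arXiv:2210.17019 — 14 statements merged into one kernel-verified Lean document; each statement's English description precedes it below -/
import Mathlib

section
/- For coprime positive integers a, b ≥ 2, the number of positive integers not representable as a nonnegative integer combination of a and b equals (a-1)(b-1)/2. -/
theorem stmt1 (a b : ℕ) (ha : 2 ≤ a) (hb : 2 ≤ b) (h : Nat.gcd a b = 1) :
    {n : ℕ | 0 < n ∧ ¬ ∃ x y : ℕ, n = a * x + b * y}.ncard = (a - 1) * (b - 1) / 2 := by
  classical
  haveI : NeZero b := ⟨by omega⟩
  set P : ℕ → Prop := fun n => ∃ x y : ℕ, n = a * x + b * y with hPdef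
  have hcop : IsCoprime (a : ℤ) (b : ℤ) := by
    rw [Int.isCoprime_iff_gcd_eq_one]
    exact_mod_cast h
  -- existence of canonical x
  have hx : ∀ n : ℕ, ∃ x : ℕ, x < b ∧ (b : ℤ) ∣ (n : ℤ) - a * x := by
    intro n
    refine ⟨((n : ZMod b) * (a : ZMod b)⁻¹).val, ZMod.val_lt _, ?_⟩
    rw [← ZMod.intCast_zmod_eq_zero_iff_dvd]
    push_cast
    rw [ZMod.natCast_val, ZMod.cast_id]
    have : (a : ZMod b) * (a : ZMod b)⁻¹ = 1 := ZMod.coe_mul_inv_eq_one a h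
    rw [mul_comm (n : ZMod b) _ , ← mul_assoc, this, one_mul, sub_self]
  -- characterization
  have key : ∀ n x : ℕ, x < b → (b : ℤ) ∣ (n : ℤ) - a * x → (P n ↔ a * x ≤ n) := by
    intro n x hxb hdvd
    constructor
    · rintro ⟨x', y', rfl⟩
      have h1 : (b : ℤ) ∣ (a : ℤ) * ((x' : ℤ) - x) := by
        obtain ⟨k, hk⟩ := hdvd
        exact ⟨k - y', by push_cast at hk ⊢; linarith⟩
      have h2 : (b : ℤ) ∣ ((x' : ℤ) - x) := (hcop.symm.dvd_of_dvd_mul_left h1)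
      have h3 : (x : ℤ) ≤ x' := by
        by_contra h4
        obtain ⟨k, hk⟩ := h2
        have hkneg : k ≤ -1 := by nlinarith
        have : (x' : ℤ) - x ≤ -b := by calc (x':ℤ) - x = b * k := hk
                                            _ ≤ b * (-1) := by
                                              apply mul_le_mul_of_nonneg_left hkneg (by positivity)
                                            _ = -b := by ring
        omega
      have : x ≤ x' := by exact_mod_cast h3
      calc a * x ≤ a * x' := Nat.mul_le_mul_left a this
        _ ≤ a * x' + b * y' := Nat.le_add_right _ _
    · intro hle
      obtain ⟨k, hk⟩ := hdvd
      have hk0 : 0 ≤ k := by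
        by_contra h4
        have : (b:ℤ) * k ≤ b * (-1) := mul_le_mul_of_nonneg_left (by omega) (by positivity)
        have h5 : (n : ℤ) - a * x ≥ 0 := by
          have : (a*x : ℕ) ≤ n := hle
          push_cast at this ⊢
          linarith
        omega
      refine ⟨x, k.toNat, ?_⟩
      have : (n : ℤ) = a * x + b * k.toNat := by
        rw [Int.toNat_of_nonneg hk0]; linarith
      exact_mod_cast this
  set M : ℕ := (a - 1) * (b - 1) with hMdef
  have hMcast : (M : ℤ) = (a : ℤ) * b - a - b + 1 := by
    rw [hMdef]
    push_cast [Nat.cast_sub (by omega : 1 ≤ a), Nat.cast_sub (by omega : 1 ≤ b)]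
    ring
  have hM1 : 1 ≤ M := by
    rw [hMdef]
    have : 1 ≤ a - 1 := by omega
    have : 1 ≤ b - 1 := by omega
    nlinarith
  -- every n ≥ M is representable
  have hbig : ∀ n : ℕ, M ≤ n → P n := by
    intro n hn
    obtain ⟨x, hxb, hdvd⟩ := hx n
    rw [key n x hxb hdvd]
    by_contra h4
    have h5 : (n : ℤ) < a * x := by
      have : ¬ ((a*x : ℕ) ≤ n) := h4
      push_cast at this ⊢; omega
    obtain ⟨k, hk⟩ := hdvd
    have hk1 : k ≤ -1 := by nlinarith
    have h6 : (n : ℤ) - a * x ≤ -b := by nlinarith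
    have h7 : (a : ℤ) * x ≤ a * (b - 1) := by
      apply mul_le_mul_of_nonneg_left (by omega : (x:ℤ) ≤ (b:ℤ) - 1) (by positivity)
    have h8 : (M : ℤ) ≤ n := by exact_mod_cast hn
    rw [hMcast] at h8
    nlinarith
  -- symmetry
  have sym : ∀ n : ℕ, n < M → (P n ↔ ¬ P (M - 1 - n)) := by
    intro n hn
    obtain ⟨x, hxb, hdvd⟩ := hx n
    obtain ⟨k, hk⟩ := hdvd
    have hx2 : b - 1 - x < b := by omega
    have c1 : ((b - 1 - x : ℕ) : ℤ) = (b : ℤ) - 1 - x := by omega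
    have c2 : ((M - 1 - n : ℕ) : ℤ) = (M : ℤ) - 1 - n := by omega
    have hdvd2 : (b : ℤ) ∣ ((M - 1 - n : ℕ) : ℤ) - a * (b - 1 - x : ℕ) := by
      refine ⟨-k - 1, ?_⟩
      rw [c1, c2, hMcast]
      linear_combination -hk
    rw [key n x hxb ⟨k, hk⟩, key _ _ hx2 hdvd2]
    have e1 : ((a * (b - 1 - x) : ℕ) : ℤ) = (a : ℤ) * b - a - a * x := by
      push_cast [c1]; ring
    constructor
    · intro h3 h4
      have h3' : (a : ℤ) * x ≤ n := by exact_mod_cast h3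
      have h4' : ((a * (b - 1 - x) : ℕ) : ℤ) ≤ ((M - 1 - n : ℕ) : ℤ) := by exact_mod_cast h4
      rw [e1, c2, hMcast] at h4'
      omega
    · intro h4
      have h4' : ¬ (((a * (b - 1 - x) : ℕ) : ℤ) ≤ ((M - 1 - n : ℕ) : ℤ)) := by
        exact_mod_cast h4
      rw [e1, c2, hMcast] at h4'
      have h5 : (a : ℤ) * x - n < b := by omega
      have hk0 : 0 ≤ k := by nlinarith
      have h6 : (a : ℤ) * x ≤ n := by nlinarith
      exact_mod_cast h6
  set A : Finset ℕ := (Finset.range M).filter (fun n => ¬ P n) with hAdef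
  set B : Finset ℕ := (Finset.range M).filter P with hBdef
  have hsum : B.card + A.card = M := by
    rw [hBdef, hAdef, Finset.card_filter_add_card_filter_not, Finset.card_range]
  have hAB : A.card = B.card := by
    apply Finset.card_bij' (fun n _ => M - 1 - n) (fun n _ => M - 1 - n)
    · intro n hn
      rw [hAdef, Finset.mem_filter, Finset.mem_range] at hn
      rw [hBdef, Finset.mem_filter, Finset.mem_range]
      refine ⟨by omega, ?_⟩
      by_contra h4
      exact hn.2 ((sym n hn.1).mpr h4)
    · intro n hn
      rw [hBdef, Finset.mem_filter, Finset.mem_range] at hn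
      rw [hAdef, Finset.mem_filter, Finset.mem_range]
      have hlt : M - 1 - n < M := by omega
      refine ⟨hlt, ?_⟩
      intro h4
      have := (sym _ hlt).mp h4
      have heq : M - 1 - (M - 1 - n) = n := by omega
      rw [heq] at this
      exact this hn.2
    · intro n hn
      rw [hAdef, Finset.mem_filter, Finset.mem_range] at hn
      omega
    · intro n hn
      rw [hBdef, Finset.mem_filter, Finset.mem_range] at hn
      omega
  have hA2 : 2 * A.card = M := by omega
  have hSeq : {n : ℕ | 0 < n ∧ ¬ ∃ x y : ℕ, n = a * x + b * y} = (A : Set ℕ) := by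
    ext n
    simp only [Set.mem_setOf_eq, hAdef, Finset.coe_filter, Finset.mem_range,
      Set.mem_setOf_eq]
    constructor
    · rintro ⟨hp, hnp⟩
      refine ⟨?_, hnp⟩
      by_contra h4
      exact hnp (hbig n (by omega))
    · rintro ⟨hlt, hnp⟩
      refine ⟨?_, hnp⟩
      by_contra h4
      exact hnp ⟨0, 0, by omega⟩
  rw [hSeq, Set.ncard_coe_finset]
  omega
end

section
/- For coprime positive integers a, b ≥ 2, the sum of all positive integers not representable as a nonnegative integer combination of a and b equals (1/12)(a-1)(b-1)(2ab - a - b - 1). -/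
open Finset

private lemma sylv_range_sum (n : ℕ) : ∑ i ∈ range n, (i:ℚ) = n*(n-1)/2 := by
  induction n with
  | zero => simp
  | succ n ih => rw [Finset.sum_range_succ, ih]; push_cast; ring

private lemma sylv_range_sq (n : ℕ) : ∑ i ∈ range n, (i:ℚ)^2 = n*(n-1)*(2*n-1)/6 := by
  induction n with
  | zero => simp
  | succ n ih => rw [Finset.sum_range_succ, ih]; push_cast; ring

private lemma sylv_Ico_eq_range (f : ℕ → ℚ) (hf : f 0 = 0) (n : ℕ) :
    ∑ i ∈ Ico 1 n, f i = ∑ i ∈ range n, f i := by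
  apply Finset.sum_subset
  · intro x hx
    simp only [Finset.mem_Ico] at hx
    simp only [Finset.mem_range]
    omega
  · intro x hx hx'
    simp only [Finset.mem_range] at hx
    simp only [Finset.mem_Ico] at hx'
    have : x = 0 := by omega
    rw [this, hf]

private lemma sylv_Icc_sum (m : ℕ) : ∑ k ∈ Icc 1 m, (k:ℚ) = m*(m+1)/2 := by
  induction m with
  | zero => simp
  | succ m ih =>
      rw [Finset.sum_Icc_succ_top (by omega), ih]
      push_cast; ring

/-- Injectivity core: the pair (y,k) is determined by b*y - a*k. -/
private lemma sylv_inj (a b : ℕ) (ha : 2 ≤ a) (h : Nat.gcd a b = 1)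
    {y y' k k' : ℕ} (hy : y ∈ Finset.Ico 1 a) (hy' : y' ∈ Finset.Ico 1 a)
    (hk : k ∈ Finset.Icc 1 (b*y/a)) (hk' : k' ∈ Finset.Icc 1 (b*y'/a))
    (he : b*y - a*k = b*y' - a*k') : y = y' ∧ k = k' := by
  simp only [Finset.mem_Ico] at hy hy'
  simp only [Finset.mem_Icc] at hk hk'
  have hak : a*k ≤ b*y := le_trans (Nat.mul_le_mul_left _ hk.2) (Nat.mul_div_le _ _)
  have hak' : a*k' ≤ b*y' := le_trans (Nat.mul_le_mul_left _ hk'.2) (Nat.mul_div_le _ _)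
  have heq : b*y + a*k' = b*y' + a*k := by omega
  have hmod : (b*y + a*k') % a = (b*y' + a*k) % a := by rw [heq]
  rw [Nat.add_mul_mod_self_left, Nat.add_mul_mod_self_left] at hmod
  have hyy : y % a = y' % a := Nat.ModEq.cancel_left_of_coprime h hmod
  rw [Nat.mod_eq_of_lt hy.2, Nat.mod_eq_of_lt hy'.2] at hyy
  subst hyy
  have : a*k = a*k' := by omega
  exact ⟨rfl, Nat.eq_of_mul_eq_mul_left (by omega) this⟩

/-- Characterization of positive non-representable numbers. -/
private lemma sylv_char (a b : ℕ) (ha : 2 ≤ a) (hb : 2 ≤ b) (h : Nat.gcd a b = 1) (n : ℕ) :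
    (0 < n ∧ ¬ ∃ x y : ℕ, n = a * x + b * y) ↔
    ∃ y ∈ Finset.Ico 1 a, ∃ k ∈ Finset.Icc 1 (b*y/a), b*y - a*k = n := by
  haveI : NeZero a := ⟨by omega⟩
  constructor
  · rintro ⟨hn, hrep⟩
    set u : ZMod a := (b : ZMod a)⁻¹ * n with hu
    set y := u.val with hy
    have hyl : y < a := ZMod.val_lt u
    have hbu : IsUnit (b : ZMod a) := (ZMod.isUnit_iff_coprime b a).mpr (Nat.coprime_comm.mp h)
    have hcong : ((b*y : ℕ) : ZMod a) = (n : ZMod a) := by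
      push_cast
      rw [hy, ZMod.natCast_val, ZMod.cast_id, hu, ← mul_assoc,
        ZMod.mul_inv_of_unit _ hbu, one_mul]
    have hmod : b*y ≡ n [MOD a] := (ZMod.natCast_eq_natCast_iff _ _ _).mp hcong
    have hy0 : y ≠ 0 := by
      rintro hy0
      rw [hy0, mul_zero] at hmod
      have h2 : 0 % a = n % a := hmod
      rw [Nat.zero_mod] at h2
      have hd : a ∣ n := Nat.dvd_of_mod_eq_zero h2.symm
      exact hrep ⟨n/a, 0, by rw [Nat.mul_div_cancel' hd]; ring⟩
    have hlt : n < b*y := by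
      by_contra hle
      push_neg at hle
      have hdvd : a ∣ n - b*y := (Nat.modEq_iff_dvd' hle).mp hmod
      refine hrep ⟨(n - b*y)/a, y, ?_⟩
      rw [Nat.mul_div_cancel' hdvd]
      omega
    have hdvd : a ∣ b*y - n := (Nat.modEq_iff_dvd' (le_of_lt hlt)).mp hmod.symm
    have hmc : a * ((b*y - n)/a) = b*y - n := Nat.mul_div_cancel' hdvd
    refine ⟨y, by simp only [Finset.mem_Ico]; omega, (b*y - n)/a, ?_, by rw [hmc]; omega⟩
    simp only [Finset.mem_Icc]
    constructor
    · have hle2 : a ≤ b*y - n := Nat.le_of_dvd (by omega) hdvd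
      exact (Nat.one_le_div_iff (by omega)).mpr hle2
    · apply Nat.div_le_div_right
      omega
  · rintro ⟨y, hy, k, hk, rfl⟩
    simp only [Finset.mem_Ico] at hy
    simp only [Finset.mem_Icc] at hk
    have hak : a*k ≤ b*y := le_trans (Nat.mul_le_mul_left _ hk.2) (Nat.mul_div_le _ _)
    have hnd : ¬ a ∣ b*y := by
      intro hd
      have hdy : a ∣ y := Nat.Coprime.dvd_of_dvd_mul_left h hd
      have := Nat.le_of_dvd (by omega) hdy
      omega
    have hpos : 0 < b*y - a*k := by
      rcases Nat.lt_or_ge (a*k) (b*y) with hl | hg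
      · omega
      · exact absurd ((le_antisymm hak hg) ▸ Dvd.intro k rfl) hnd
    refine ⟨hpos, ?_⟩
    rintro ⟨x, y', hxy⟩
    have h1 : a*(x+k) + b*y' ≡ 0 + b*y' [MOD a] :=
      Nat.ModEq.add_right _ (Nat.modEq_zero_iff_dvd.mpr (Dvd.intro _ rfl))
    have heq : b*y = a*(x+k) + b*y' := by
      have : a*(x+k) = a*x + a*k := by ring
      omega
    have hmod : b*y ≡ b*y' [MOD a] := by
      rw [heq]
      simpa using h1
    have hyy : y ≡ y' [MOD a] := Nat.ModEq.cancel_left_of_coprime h hmod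
    have hyle : y ≤ y' := by
      have h2 : y % a = y' % a := hyy
      rw [Nat.mod_eq_of_lt hy.2] at h2
      have := Nat.mod_le y' a
      omega
    have hble : b*y ≤ b*y' := Nat.mul_le_mul_left _ hyle
    have hka : a ≤ a*k := Nat.le_mul_of_pos_right a (by omega)
    omega

/-- y ↦ b*y % a permutes Ico 1 a. -/
private lemma sylv_perm (a b : ℕ) (ha : 2 ≤ a) (h : Nat.gcd a b = 1) (f : ℕ → ℚ) :
    ∑ y ∈ Finset.Ico 1 a, f (b*y % a) = ∑ y ∈ Finset.Ico 1 a, f y := by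
  have hinj : ∀ x ∈ Finset.Ico 1 a, ∀ y ∈ Finset.Ico 1 a, b*x % a = b*y % a → x = y := by
    intro x hx y hy hxy
    simp only [Finset.mem_Ico] at hx hy
    have hmod : x % a = y % a := Nat.ModEq.cancel_left_of_coprime h hxy
    rw [Nat.mod_eq_of_lt hx.2, Nat.mod_eq_of_lt hy.2] at hmod
    exact hmod
  have hmaps : ∀ y ∈ Finset.Ico 1 a, b*y % a ∈ Finset.Ico 1 a := by
    intro y hy
    simp only [Finset.mem_Ico] at hy ⊢
    refine ⟨?_, Nat.mod_lt _ (by omega)⟩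
    rcases Nat.eq_zero_or_pos (b*y % a) with h0 | h0
    · exfalso
      have hd : a ∣ b*y := Nat.dvd_of_mod_eq_zero h0
      have hdy : a ∣ y := Nat.Coprime.dvd_of_dvd_mul_left h hd
      have := Nat.le_of_dvd (by omega) hdy
      omega
    · omega
  have himg : (Finset.Ico 1 a).image (fun y => b*y % a) = Finset.Ico 1 a := by
    apply Finset.eq_of_subset_of_card_le
    · intro n hn
      simp only [Finset.mem_image] at hn
      obtain ⟨y, hy, rfl⟩ := hn
      exact hmaps y hy
    · rw [Finset.card_image_of_injOn]
      intro x hx y hy hxy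
      exact hinj x (Finset.mem_coe.mp hx) y (Finset.mem_coe.mp hy) hxy
  conv_rhs => rw [← himg]
  rw [Finset.sum_image hinj]

/-- Inner sum computation. -/
private lemma sylv_inner (a b : ℕ) (ha : 2 ≤ a) (y : ℕ) :
    ∑ k ∈ Finset.Icc 1 (b*y/a), ((b*y - a*k : ℕ):ℚ)
      = ((b*y:ℕ):ℚ)^2/(2*a) - (((b*y % a:ℕ)):ℚ)^2/(2*a)
        - (a:ℚ)*((b*y:ℕ):ℚ)/(2*a) + (a:ℚ)*(((b*y % a:ℕ)):ℚ)/(2*a) := by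
  have ha0 : (a:ℚ) ≠ 0 := by
    have : (0:ℕ) < a := by omega
    exact_mod_cast this.ne'
  have hdm : a * (b*y/a) + b*y % a = b*y := Nat.div_add_mod _ _
  have hle : ∀ k ∈ Finset.Icc 1 (b*y/a), a*k ≤ b*y := by
    intro k hk
    simp only [Finset.mem_Icc] at hk
    exact le_trans (Nat.mul_le_mul_left _ hk.2) (Nat.mul_div_le _ _)
  have hstep : ∀ k ∈ Finset.Icc 1 (b*y/a), ((b*y - a*k : ℕ):ℚ) = ((b*y:ℕ):ℚ) - (a:ℚ)*(k:ℚ) := by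
    intro k hk
    rw [Nat.cast_sub (hle k hk)]
    push_cast
    ring
  rw [Finset.sum_congr rfl hstep, Finset.sum_sub_distrib, Finset.sum_const, ← Finset.mul_sum,
    sylv_Icc_sum, Nat.card_Icc]
  have hdmq : (a:ℚ) * ((b*y/a : ℕ):ℚ) + ((b*y % a : ℕ):ℚ) = ((b*y:ℕ):ℚ) := by
    exact_mod_cast hdm
  have hm : ((b*y/a : ℕ):ℚ) = (((b*y:ℕ):ℚ) - ((b*y % a : ℕ):ℚ))/a := by
    rw [eq_div_iff ha0]
    linarith
  rw [hm]
  simp only [Nat.add_sub_cancel, nsmul_eq_mul]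
  push_cast [hm]
  field_simp
  ring

theorem stmt2 (a b : ℕ) (ha : 2 ≤ a) (hb : 2 ≤ b) (h : Nat.gcd a b = 1) :
    (∑ᶠ n ∈ {n : ℕ | 0 < n ∧ ¬ ∃ x y : ℕ, n = a * x + b * y}, (n : ℚ))
      = ((a : ℚ) - 1) * ((b : ℚ) - 1) * (2 * a * b - a - b - 1) / 12 := by
  classical
  have ha0 : (a:ℚ) ≠ 0 := by
    have : (0:ℕ) < a := by omega
    exact_mod_cast this.ne'
  set T : Finset ℕ :=
    (Finset.Ico 1 a).biUnion (fun y => (Finset.Icc 1 (b*y/a)).image (fun k => b*y - a*k)) with hT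
  have hset : {n : ℕ | 0 < n ∧ ¬ ∃ x y : ℕ, n = a * x + b * y} = ↑T := by
    ext n
    simp only [Set.mem_setOf_eq, Finset.mem_coe, hT, Finset.mem_biUnion, Finset.mem_image]
    exact sylv_char a b ha hb h n
  rw [hset, finsum_mem_coe_finset]
  have hdisj : (↑(Finset.Ico 1 a) : Set ℕ).PairwiseDisjoint
      (fun y => (Finset.Icc 1 (b*y/a)).image (fun k => b*y - a*k)) := by
    intro y hy y' hy' hne
    simp only [Function.onFun]
    rw [Finset.disjoint_left]
    intro n hn hn'
    simp only [Finset.mem_image] at hn hn'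
    obtain ⟨k, hk, hkn⟩ := hn
    obtain ⟨k', hk', hkn'⟩ := hn'
    exact hne (sylv_inj a b ha h (Finset.mem_coe.mp hy) (Finset.mem_coe.mp hy') hk hk'
      (hkn.trans hkn'.symm)).1
  rw [hT, Finset.sum_biUnion hdisj]
  have hsum1 : ∀ y ∈ Finset.Ico 1 a,
      ∑ n ∈ (Finset.Icc 1 (b*y/a)).image (fun k => b*y - a*k), (n:ℚ)
        = ∑ k ∈ Finset.Icc 1 (b*y/a), ((b*y - a*k : ℕ):ℚ) := by
    intro y hy
    apply Finset.sum_image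
    intro k hk k' hk' he
    exact (sylv_inj a b ha h hy hy hk hk' he).2
  rw [Finset.sum_congr rfl hsum1]
  rw [Finset.sum_congr rfl (fun y _ => sylv_inner a b ha y)]
  rw [Finset.sum_add_distrib, Finset.sum_sub_distrib, Finset.sum_sub_distrib]
  have e1 : ∑ y ∈ Finset.Ico 1 a, ((b*y % a : ℕ):ℚ)^2/(2*a)
      = ∑ y ∈ Finset.Ico 1 a, ((y:ℕ):ℚ)^2/(2*a) :=
    sylv_perm a b ha h (fun n => ((n:ℕ):ℚ)^2/(2*a))
  have e2 : ∑ y ∈ Finset.Ico 1 a, (a:ℚ)*((b*y % a : ℕ):ℚ)/(2*a)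
      = ∑ y ∈ Finset.Ico 1 a, (a:ℚ)*((y:ℕ):ℚ)/(2*a) :=
    sylv_perm a b ha h (fun n => (a:ℚ)*((n:ℕ):ℚ)/(2*a))
  rw [e1, e2]
  have hP : ∑ y ∈ Finset.Ico 1 a, (y:ℚ) = (a:ℚ)*((a:ℚ)-1)/2 := by
    rw [sylv_Ico_eq_range (fun n => (n:ℚ)) (by simp) a, sylv_range_sum]
  have hQ : ∑ y ∈ Finset.Ico 1 a, (y:ℚ)^2 = (a:ℚ)*((a:ℚ)-1)*(2*(a:ℚ)-1)/6 := by
    rw [sylv_Ico_eq_range (fun n => (n:ℚ)^2) (by simp) a, sylv_range_sq]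
  have eA : ∑ y ∈ Finset.Ico 1 a, ((b*y:ℕ):ℚ)^2/(2*a)
      = (b:ℚ)^2 * ((a:ℚ)*((a:ℚ)-1)*(2*(a:ℚ)-1)/6) / (2*a) := by
    have hc : ∀ y ∈ Finset.Ico 1 a, ((b*y:ℕ):ℚ)^2/(2*a)
        = (b:ℚ)^2 * ((y:ℚ)^2/(2*(a:ℚ))) := by
      intro y _
      push_cast
      ring
    rw [Finset.sum_congr rfl hc, ← Finset.mul_sum, ← Finset.sum_div, hQ]
    ring
  have eB : ∑ y ∈ Finset.Ico 1 a, ((y:ℕ):ℚ)^2/(2*a)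
      = ((a:ℚ)*((a:ℚ)-1)*(2*(a:ℚ)-1)/6) / (2*a) := by
    rw [← Finset.sum_div, hQ]
  have eC : ∑ y ∈ Finset.Ico 1 a, (a:ℚ)*((b*y:ℕ):ℚ)/(2*a)
      = (a:ℚ)*(b:ℚ)*((a:ℚ)*((a:ℚ)-1)/2)/(2*a) := by
    have hc : ∀ y ∈ Finset.Ico 1 a, (a:ℚ)*((b*y:ℕ):ℚ)/(2*a)
        = ((a:ℚ)*(b:ℚ)) * ((y:ℚ)/(2*(a:ℚ))) := by
      intro y _
      push_cast
      ring
    rw [Finset.sum_congr rfl hc, ← Finset.mul_sum, ← Finset.sum_div, hP]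
    ring
  have eD : ∑ y ∈ Finset.Ico 1 a, (a:ℚ)*((y:ℕ):ℚ)/(2*a)
      = (a:ℚ)*((a:ℚ)*((a:ℚ)-1)/2)/(2*a) := by
    rw [← Finset.sum_div, ← Finset.mul_sum, hP]
  rw [eA, eB, eC, eD]
  field_simp
  ring
end

section
/- Let A = {a₁, a₂, …, a_k} be a set of positive integers with gcd 1 and a₁ = min A. With m_i the least element of the numerical semigroup generated by A congruent to i modulo a₁ (for 1 ≤ i ≤ a₁-1), the number of positive integers not representable by A equals (1/a₁)·Σ_{i=1}^{a₁-1} m_i − (a₁−1)/2. -/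
theorem stmt4 (A : Finset ℕ) (hA : A.Nonempty) (hpos : ∀ x ∈ A, 0 < x)
    (hgcd : A.gcd id = 1) (a1 : ℕ) (ha1 : a1 = A.min' hA)
    (m : ℕ → ℕ)
    (hm : ∀ i, 1 ≤ i → i ≤ a1 - 1 →
      IsLeast {n : ℕ | 0 < n ∧
        n ∈ AddSubmonoid.closure (A : Set ℕ) ∧ n % a1 = i} (m i)) :
    ({n : ℕ | 0 < n ∧ n ∉ AddSubmonoid.closure (A : Set ℕ)}.ncard : ℚ)
      = (∑ i ∈ Finset.Icc 1 (a1 - 1), (m i : ℚ)) / a1 - ((a1 : ℚ) - 1) / 2 := by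
  have ha1A : a1 ∈ A := by rw [ha1]; exact A.min'_mem hA
  have ha1pos : 0 < a1 := hpos a1 ha1A
  set S := AddSubmonoid.closure (A : Set ℕ) with hS
  have ha1S : a1 ∈ S := AddSubmonoid.subset_closure ha1A
  have hmulS : ∀ t : ℕ, a1 * t ∈ S := by
    intro t
    have := nsmul_mem ha1S t
    simpa [nsmul_eq_mul, mul_comm] using this
  set q : ℕ → ℕ := fun i => m i / a1 with hqdef
  have hq : ∀ i, q i = m i / a1 := fun _ => rfl
  have hmi : ∀ i ∈ Finset.Icc 1 (a1 - 1), m i = a1 * q i + i := by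
    intro i hi
    simp only [Finset.mem_Icc] at hi
    have h := (hm i hi.1 hi.2).1.2.2
    have h2 := Nat.div_add_mod (m i) a1
    rw [hq]
    omega
  have hmodeq : ∀ i ∈ Finset.Icc 1 (a1 - 1), ∀ t : ℕ, (a1 * t + i) % a1 = i := by
    intro i hi t
    simp only [Finset.mem_Icc] at hi
    rw [Nat.mul_add_mod]
    exact Nat.mod_eq_of_lt (by omega)
  set T : Finset ℕ := (Finset.Icc 1 (a1 - 1)).biUnion
    (fun i => (Finset.range (q i)).image (fun t => a1 * t + i)) with hT
  have hmemT : ∀ n, n ∈ T ↔ ∃ i ∈ Finset.Icc 1 (a1 - 1), n % a1 = i ∧ n < m i := by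
    intro n
    simp only [hT, Finset.mem_biUnion, Finset.mem_image, Finset.mem_range]
    constructor
    · rintro ⟨i, hi, t, ht, rfl⟩
      refine ⟨i, hi, hmodeq i hi t, ?_⟩
      rw [hmi i hi]
      have := (Nat.mul_lt_mul_left ha1pos).mpr ht
      omega
    · rintro ⟨i, hi, hmod, hlt⟩
      refine ⟨i, hi, n / a1, ?_, ?_⟩
      · have h1 := Nat.div_add_mod n a1
        have h2 := hmi i hi
        by_contra hcon
        push_neg at hcon
        have h4 : a1 * q i ≤ a1 * (n / a1) := Nat.mul_le_mul_left a1 hcon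
        omega
      · have h1 := Nat.div_add_mod n a1
        omega
  have hset : {n : ℕ | 0 < n ∧ n ∉ S} = ↑T := by
    ext n
    simp only [Set.mem_setOf_eq, Finset.mem_coe, hmemT]
    constructor
    · rintro ⟨hn, hnS⟩
      have hlt : n % a1 < a1 := Nat.mod_lt _ ha1pos
      have hne : n % a1 ≠ 0 := by
        intro h0
        refine hnS ?_
        have hd : a1 * (n / a1) = n := by
          have := Nat.div_add_mod n a1
          omega
        exact hd ▸ hmulS (n / a1)
      set i := n % a1 with hi
      have hiI : i ∈ Finset.Icc 1 (a1 - 1) := by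
        simp only [Finset.mem_Icc]; omega
      refine ⟨i, hiI, rfl, ?_⟩
      by_contra hcon
      push_neg at hcon
      refine hnS ?_
      have hmS := (hm i (by omega) (by omega)).1.2.1
      have hx := Nat.div_add_mod n a1
      have hy := hmi i hiI
      -- n = m i + a1 * (n / a1 - q i)
      have hqle : q i ≤ n / a1 := by
        by_contra hq2
        push_neg at hq2
        have h5 : a1 * (n / a1 + 1) ≤ a1 * q i :=
          Nat.mul_le_mul_left a1 (by omega)
        rw [Nat.mul_add, Nat.mul_one] at h5
        omega
      have heq : n = m i + a1 * (n / a1 - q i) := by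
        have hms : a1 * (n / a1 - q i) = a1 * (n / a1) - a1 * q i :=
          Nat.mul_sub _ _ _
        have h6 : a1 * q i ≤ a1 * (n / a1) := Nat.mul_le_mul_left a1 hqle
        omega
      rw [heq]
      exact AddSubmonoid.add_mem _ hmS (hmulS _)
    · rintro ⟨i, hi, hmod, hlt⟩
      simp only [Finset.mem_Icc] at hi
      have hn : 0 < n := by
        have := Nat.mod_le n a1
        omega
      refine ⟨hn, fun hnS => ?_⟩
      have := (hm i hi.1 hi.2).2 ⟨hn, hnS, hmod⟩
      omega
  rw [hset, Set.ncard_coe_finset]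
  have hcard : T.card = ∑ i ∈ Finset.Icc 1 (a1 - 1), q i := by
    rw [hT, Finset.card_biUnion]
    · refine Finset.sum_congr rfl fun i hi => ?_
      rw [Finset.card_image_of_injective _ ?_, Finset.card_range]
      intro x y hxy
      simp only at hxy
      exact Nat.eq_of_mul_eq_mul_left ha1pos (by omega)
    · intro i hi j hj hij
      simp only [Finset.disjoint_left, Finset.mem_image, Finset.mem_range]
      rintro n ⟨t, ht, rfl⟩ ⟨s, hs, heq⟩
      have h1 := hmodeq i hi t
      have h2 := hmodeq j hj s
      rw [heq] at h2
      exact hij (by omega)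
  rw [hcard]
  have hsumi : (∑ i ∈ Finset.Icc 1 (a1 - 1), (i : ℚ)) * 2 = ((a1 : ℚ) - 1) * a1 := by
    have hIcc : Finset.Icc 1 (a1 - 1) = Finset.Ico 1 a1 := by
      rw [← Finset.Ico_add_one_right_eq_Icc]
      congr 1
      omega
    have hnat : (∑ i ∈ Finset.Ico 1 a1, i) * 2 = a1 * (a1 - 1) := by
      have h0 : (∑ i ∈ Finset.range a1, i) = ∑ i ∈ Finset.Ico 1 a1, i := by
        rw [Finset.range_eq_Ico, ← Finset.sum_Ico_consecutive _ (by omega : 0 ≤ 1) (by omega : 1 ≤ a1)]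
        simp
      rw [← h0, Finset.sum_range_id_mul_two]
    rw [hIcc]
    have := congrArg (fun x : ℕ => (x : ℚ)) hnat
    push_cast [Nat.cast_sub (by omega : 1 ≤ a1)] at this
    linarith [this]
  have hsumm : (∑ i ∈ Finset.Icc 1 (a1 - 1), (m i : ℚ)) =
      (a1 : ℚ) * (∑ i ∈ Finset.Icc 1 (a1 - 1), (q i : ℚ)) +
        ∑ i ∈ Finset.Icc 1 (a1 - 1), (i : ℚ) := by
    rw [Finset.mul_sum, ← Finset.sum_add_distrib]
    refine Finset.sum_congr rfl fun i hi => ?_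
    rw [hmi i hi]
    push_cast
    ring
  have ha1Q : (a1 : ℚ) ≠ 0 := by positivity
  rw [hsumm]
  push_cast
  field_simp
  ring_nf
  nlinarith [hsumi]
end

section
/- Let A = {a₁, a₂, …, a_k} be a set of positive integers with gcd 1 and a₁ = min A. With m_i the least element of the numerical semigroup generated by A congruent to i modulo a₁ (for 1 ≤ i ≤ a₁-1), the sum of all positive integers not representable by A equals (1/(2a₁))·Σ_{i=1}^{a₁-1} m_i² − (1/2)·Σ_{i=1}^{a₁-1} m_i + (a₁²−1)/12. -/
/-!
Multiples of `a₁` are representable, and an integer `n ≢ 0 (mod a₁)` is representable exactly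
when `n ≥ m_{n mod a₁}`, since `m_i + k a₁` is representable. So the gaps in the class of `i` are `i, i + a₁, …, m_i - a₁`, an
arithmetic progression whose sum is `(m_i² - i²) / (2a₁) - (m_i - i) / 2`. Summing over the
classes, the terms in `i` add up to `(a₁² - 1) / 12`.
-/

open Finset

/-- The `m i`, `0 < i < a`, are the nonzero elements of the Apéry set of `S` with respect to `a`. -/
def IsAperyFamily (S : AddSubmonoid ℕ) (a : ℕ) (m : ℕ → ℕ) : Prop :=
  ∀ i, 1 ≤ i → i ≤ a - 1 → IsLeast {n : ℕ | 0 < n ∧ n ∈ S ∧ n % a = i} (m i)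

namespace IsAperyFamily

variable {S : AddSubmonoid ℕ} {a : ℕ} {m : ℕ → ℕ}

theorem mod_eq (hm : IsAperyFamily S a m) {i : ℕ} (hi : i ∈ Icc 1 (a - 1)) : m i % a = i :=
  (hm i (mem_Icc.mp hi).1 (mem_Icc.mp hi).2).1.2.2

theorem mem_iff (hm : IsAperyFamily S a m) (haS : a ∈ S) (ha : 0 < a) {n : ℕ}
    (hn : n % a ≠ 0) : n ∈ S ↔ m (n % a) ≤ n := by
  have hlt : n % a < a := Nat.mod_lt n ha
  obtain ⟨⟨-, hmS, hmod⟩, hleast⟩ := hm (n % a) (by omega) (by omega)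
  refine ⟨fun hnS => hleast ⟨Nat.pos_of_ne_zero fun h => hn (by simp [h]), hnS, rfl⟩,
    fun hle => ?_⟩
  obtain ⟨k, hk⟩ := (Nat.modEq_iff_dvd' hle).mp hmod
  have hka : k * a ∈ S := by simpa using S.nsmul_mem haS k
  rw [show n = m (n % a) + k * a by rw [mul_comm] at hk; omega]
  exact S.add_mem hmS hka

theorem gaps_eq (hm : IsAperyFamily S a m) (haS : a ∈ S) (ha : 0 < a) :
    {n : ℕ | 0 < n ∧ n ∉ S}
      = ↑((Icc 1 (a - 1)).biUnion fun i => (range (m i)).filter (· % a = i)) := by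
  ext n
  simp only [Set.mem_ofPred_eq, coe_biUnion, coe_Icc, Set.mem_Icc, coe_filter, mem_range,
    Set.mem_iUnion, exists_prop]
  by_cases hn : n % a = 0
  · have hnS : n ∈ S := by
      simpa [Nat.div_mul_cancel (Nat.dvd_of_mod_eq_zero hn)] using S.nsmul_mem haS (n / a)
    constructor
    · rintro ⟨-, hnS'⟩
      exact absurd hnS hnS'
    · rintro ⟨i, ⟨hi, -⟩, -, rfl⟩
      omega
  · have hlt : n % a < a := Nat.mod_lt n ha
    rw [hm.mem_iff haS ha hn]
    constructor
    · rintro ⟨-, hgap⟩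
      exact ⟨n % a, ⟨Nat.one_le_iff_ne_zero.mpr hn, by omega⟩, by omega, rfl⟩
    · rintro ⟨i, -, hgap, rfl⟩
      exact ⟨Nat.pos_of_ne_zero fun h => hn (by simp [h]), by omega⟩

end IsAperyFamily

theorem range_add_mul_filter_mod_eq {a i : ℕ} (hi : i < a) (q : ℕ) :
    (range (i + a * q)).filter (· % a = i) = (range q).image (i + a * ·) := by
  ext n
  simp only [mem_filter, mem_range, mem_image]
  constructor
  · rintro ⟨hlt, rfl⟩
    have hdiv := Nat.mod_add_div n a
    refine ⟨n / a, Nat.lt_of_mul_lt_mul_left (a := a) (by omega), hdiv⟩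
  · rintro ⟨t, ht, rfl⟩
    refine ⟨by nlinarith, ?_⟩
    rw [Nat.add_mul_mod_self_left, Nat.mod_eq_of_lt hi]

theorem sum_range_add_mul (a i q : ℕ) :
    ∑ t ∈ range q, ((i + a * t : ℕ) : ℚ) = q * i + a * q * (q - 1) / 2 := by
  induction q with
  | zero => simp
  | succ q ih => rw [sum_range_succ, ih]; push_cast; ring

theorem sum_range_filter_mod_eq {a i M : ℕ} (hi : i < a) (hM : M % a = i) :
    ∑ n ∈ (range M).filter (· % a = i), (n : ℚ)
      = (M : ℚ) ^ 2 / (2 * a) - M / 2 + ((i : ℚ) / 2 - (i : ℚ) ^ 2 / (2 * a)) := by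
  obtain ⟨q, rfl⟩ : ∃ q, M = i + a * q := ⟨M / a, by rw [← hM, Nat.mod_add_div]⟩
  have ha : (a : ℚ) ≠ 0 := by norm_cast; omega
  have hinj : Set.InjOn (i + a * ·) (range q) := fun s _ t _ h => by
    simpa [(Nat.zero_lt_of_lt hi).ne'] using h
  rw [range_add_mul_filter_mod_eq hi, sum_image hinj, sum_range_add_mul]
  push_cast
  field_simp
  ring

theorem sum_range_mul_sub (a n : ℕ) :
    ∑ i ∈ range n, (i : ℚ) * (a - i) = a * n * (n - 1) / 2 - n * (n - 1) * (2 * n - 1) / 6 := by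
  induction n with
  | zero => simp
  | succ n ih => rw [sum_range_succ, ih]; push_cast; ring

theorem sum_Icc_half_sub_sq_div {a : ℕ} (ha : 0 < a) :
    ∑ i ∈ Icc 1 (a - 1), ((i : ℚ) / 2 - (i : ℚ) ^ 2 / (2 * a)) = ((a : ℚ) ^ 2 - 1) / 12 := by
  have hrange : range a = insert 0 (Icc 1 (a - 1)) := by
    ext x
    simp only [mem_range, mem_insert, mem_Icc]
    omega
  have haQ : (a : ℚ) ≠ 0 := by norm_cast; omega
  have hsum := sum_range_mul_sub a a
  rw [hrange, sum_insert (by simp), Nat.cast_zero, zero_mul, zero_add] at hsum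
  calc ∑ i ∈ Icc 1 (a - 1), ((i : ℚ) / 2 - (i : ℚ) ^ 2 / (2 * a))
      = (∑ i ∈ Icc 1 (a - 1), (i : ℚ) * (a - i)) / (2 * a) := by
        rw [sum_div]
        refine sum_congr rfl fun i _ => ?_
        field_simp
    _ = ((a : ℚ) ^ 2 - 1) / 12 := by
        rw [hsum]
        field_simp
        ring

theorem stmt5_general (A : Finset ℕ) (hA : A.Nonempty) (hpos : ∀ x ∈ A, 0 < x)
    (a1 : ℕ) (ha1 : a1 = A.min' hA)
    (m : ℕ → ℕ)
    (hm : ∀ i, 1 ≤ i → i ≤ a1 - 1 →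
      IsLeast {n : ℕ | 0 < n ∧
        n ∈ AddSubmonoid.closure (A : Set ℕ) ∧ n % a1 = i} (m i)) :
    (∑ᶠ n ∈ {n : ℕ | 0 < n ∧ n ∉ AddSubmonoid.closure (A : Set ℕ)}, (n : ℚ))
      = (∑ i ∈ Finset.Icc 1 (a1 - 1), (m i : ℚ) ^ 2) / (2 * a1)
        - (∑ i ∈ Finset.Icc 1 (a1 - 1), (m i : ℚ)) / 2 + ((a1 : ℚ) ^ 2 - 1) / 12 := by
  have hm : IsAperyFamily _ a1 m := hm
  have haA : a1 ∈ A := ha1 ▸ A.min'_mem hA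
  have ha : 0 < a1 := hpos _ haA
  have hdisj : (Icc 1 (a1 - 1) : Set ℕ).PairwiseDisjoint
      fun i => (range (m i)).filter (· % a1 = i) := fun i _ j _ hij =>
    disjoint_left.mpr fun n hi hj => hij ((mem_filter.mp hi).2.symm.trans (mem_filter.mp hj).2)
  rw [hm.gaps_eq (AddSubmonoid.subset_closure haA) ha, finsum_mem_coe_finset, sum_biUnion hdisj,
    sum_congr rfl fun i hi => sum_range_filter_mod_eq (by grind) (hm.mod_eq hi),
    sum_add_distrib, sum_sub_distrib, ← sum_div, ← sum_div, sum_Icc_half_sub_sq_div ha]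

theorem stmt5 (A : Finset ℕ) (hA : A.Nonempty) (hpos : ∀ x ∈ A, 0 < x)
    (hgcd : A.gcd id = 1) (a1 : ℕ) (ha1 : a1 = A.min' hA)
    (m : ℕ → ℕ)
    (hm : ∀ i, 1 ≤ i → i ≤ a1 - 1 →
      IsLeast {n : ℕ | 0 < n ∧
        n ∈ AddSubmonoid.closure (A : Set ℕ) ∧ n % a1 = i} (m i)) :
    (∑ᶠ n ∈ {n : ℕ | 0 < n ∧ n ∉ AddSubmonoid.closure (A : Set ℕ)}, (n : ℚ))
      = (∑ i ∈ Finset.Icc 1 (a1 - 1), (m i : ℚ) ^ 2) / (2 * a1)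
        - (∑ i ∈ Finset.Icc 1 (a1 - 1), (m i : ℚ)) / 2 + ((a1 : ℚ) ^ 2 - 1) / 12 :=
  stmt5_general A hA hpos a1 ha1 m hm
end

section
/- Let a, d, K, k be positive integers with a ≥ 2, gcd(a,d) = 1 and K ≤ (k−1)/2, and let r = a + K − ⌊(a+K)/k⌋·k. If 0 ≤ r ≤ K, then the Sylvester number of the sequence a, a+(K+1)d, …, a+kd equals (a² + 2(K−1)a + (a+2K−1)kd + K(K−k−2) + k − r(r−k−2)) / (2k). -/
/-!
Write `S` for the semigroup generated by `a` and the `a + j * d`, `K < j ≤ k`. An element of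
`S` is `p * a + s * d` where `m ≤ p` generators of the second kind contribute `s`, so
`m * (K + 1) ≤ s ≤ m * k`. In particular `s = 0` or `s > K`, and conversely, since `2 * K < k`,
every such `s` is realised with `m = ⌈s / k⌉`. Hence the least element of `S` congruent to
`t * d` modulo `a` (`0 ≤ t < a`) is `w t = ⌈s t / k⌉ * a + s t * d`, where `s t` is `t`, or
`t + a` when `1 ≤ t ≤ K`. By Selmer's formula the number of gaps is `∑ ⌊w t / a⌋`. The ceilings
run over `K < u ≤ a + K`, `u ≠ a`, and `⌈a / k⌉ = ⌊(a + K) / k⌋` exactly because `r ≤ K`; the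
remaining part is `(a - 1) * (d - 1) / 2 + K * d` by the classical
`∑ ⌊t * d / a⌋ = (a - 1) * (d - 1) / 2`.
-/
open Finset

theorem Nat.injOn_mul_mod_range {a d : ℕ} (h : a.Coprime d) :
    Set.InjOn (fun t => t * d % a) (range a) := by
  intro x hx y hy hxy
  have hxy' : x ≡ y [MOD a] := Nat.ModEq.cancel_right_of_coprime h hxy
  rwa [Nat.ModEq, Nat.mod_eq_of_lt (mem_range.1 hx), Nat.mod_eq_of_lt (mem_range.1 hy)] at hxy'

theorem Nat.image_mul_mod_range {a d : ℕ} (h : a.Coprime d) :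
    (range a).image (fun t => t * d % a) = range a := by
  refine eq_of_subset_of_card_le (fun x hx => ?_)
    (Finset.card_image_of_injOn (Nat.injOn_mul_mod_range h)).ge
  obtain ⟨t, ht, rfl⟩ := mem_image.1 hx
  exact mem_range.2 (Nat.mod_lt _ (Nat.zero_lt_of_lt (mem_range.1 ht)))

theorem Nat.two_mul_sum_range_mul_div {a d : ℕ} (h : a.Coprime d) :
    2 * ∑ t ∈ range a, t * d / a = (a - 1) * (d - 1) := by
  rcases Nat.eq_zero_or_pos a with rfl | ha
  · simp
  set G := ∑ t ∈ range a, t * d / a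
  have hrem : ∑ t ∈ range a, t * d % a = ∑ t ∈ range a, t := by
    conv_rhs => rw [← Nat.image_mul_mod_range h]
    rw [sum_image (Nat.injOn_mul_mod_range h)]
  have hsplit : (∑ t ∈ range a, t) * d = a * G + ∑ t ∈ range a, t := by
    rw [sum_mul, mul_sum, ← hrem, ← sum_add_distrib]
    exact sum_congr rfl fun t _ => (Nat.div_add_mod (t * d) a).symm
  have hid := sum_range_id_mul_two a
  have key : a * ((a - 1) * d) = a * (2 * G + (a - 1)) := by
    calc a * ((a - 1) * d) = (∑ t ∈ range a, t) * d * 2 := by rw [mul_right_comm, hid]; ring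
      _ = a * (2 * G + (a - 1)) := by rw [hsplit, add_mul, hid]; ring
  rw [Nat.mul_sub_one, Nat.eq_of_mul_eq_mul_left ha key]
  omega

theorem Nat.mul_add_div_of_lt {k q x : ℕ} (hx : x < k) : (k * q + x) / k = q := by
  rw [Nat.mul_add_div (by omega), Nat.div_eq_of_lt hx, add_zero]

theorem Nat.sum_range_mul_add_div {k q r : ℕ} (hr : r ≤ k) :
    ∑ x ∈ range r, (k * q + x) / k = r * q := by
  rw [sum_congr rfl fun x hx => Nat.mul_add_div_of_lt ((mem_range.1 hx).trans_le hr),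
    sum_const, card_range, smul_eq_mul]

theorem Nat.sum_range_mul_div (k q : ℕ) :
    ∑ u ∈ range (k * q), u / k = k * ∑ i ∈ range q, i := by
  induction q with
  | zero => simp
  | succ q ih =>
    rw [Nat.mul_succ, sum_range_add, ih, Nat.sum_range_mul_add_div le_rfl, sum_range_succ]
    ring

theorem Nat.two_mul_sum_range_div {k q r : ℕ} (hr : r ≤ k) :
    2 * ∑ u ∈ range (k * q + r), u / k + k * q = k * q * q + 2 * r * q := by
  rw [sum_range_add, Nat.sum_range_mul_div, Nat.sum_range_mul_add_div hr, mul_add,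
    ← mul_assoc, mul_comm 2 k, mul_assoc k 2, mul_comm 2, sum_range_id_mul_two]
  rcases q with _ | q
  · simp
  · simp only [Nat.add_sub_cancel]
    ring

theorem ceilDiv_mul_succ_le {K k s : ℕ} (hk : 2 * K < k) (hs : s = 0 ∨ K < s) :
    s ⌈/⌉ k * (K + 1) ≤ s := by
  rcases hs with rfl | hs
  · simp
  have hk0 : 0 < k := by omega
  obtain ⟨q, hq⟩ : ∃ q, s ⌈/⌉ k = q + 1 := Nat.exists_eq_add_one.2 <|
    Nat.pos_of_ne_zero fun h => by have := (ceilDiv_le_iff_le_mul hk0).1 h.le; omega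
  have hlt : k * q < s := not_le.1 fun hle => by
    have := (ceilDiv_le_iff_le_mul hk0).2 hle; omega
  rw [hq]
  rcases Nat.eq_zero_or_pos q with rfl | hq0
  · omega
  · have h1 : (2 * K + 1) * q ≤ k * q := Nat.mul_le_mul_right q hk
    have h2 : K ≤ K * q := Nat.le_mul_of_pos_right K hq0
    nlinarith

theorem ceilDiv_eq_of_add_eq {a k K q r : ℕ} (h : a + K = k * q + r) (hrK : r ≤ K)
    (hK : K < k) :
    a ⌈/⌉ k = q := by
  rw [Nat.ceilDiv_eq_add_pred_div, show a + k - 1 = k * q + (r + (k - 1 - K)) by omega,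
    Nat.mul_add_div_of_lt (by omega)]

theorem Nat.lt_iff_div_lt_div_of_mod_eq {a m n : ℕ} (ha : 0 < a) (h : m % a = n % a) :
    m < n ↔ m / a < n / a := by
  have hm := Nat.div_add_mod m a
  have hn := Nat.div_add_mod n a
  conv_rhs => rw [← Nat.mul_lt_mul_left ha]
  omega

/-- Selmer's formula, with the residue classes modulo `a` listed as `t * e % a`. -/
theorem ncard_compl_eq_sum_div {S : Set ℕ} {a e : ℕ} (ha : 0 < a) (he : a.Coprime e)
    {w : ℕ → ℕ} (hw : ∀ t < a, w t % a = t * e % a)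
    (hS : ∀ n, ∀ t < a, n % a = t * e % a → (n ∈ S ↔ w t ≤ n)) :
    Sᶜ.ncard = ∑ t ∈ range a, w t / a := by
  have hgaps : Sᶜ = ↑(((range a).sigma fun t => range (w t / a)).image
      fun x => x.1 * e % a + a * x.2) := by
    ext n
    simp only [Set.mem_compl_iff, coe_image, Set.mem_image, mem_coe, mem_sigma, mem_range]
    constructor
    · intro hn
      have hres : n % a ∈ (range a).image fun t => t * e % a := by
        rw [Nat.image_mul_mod_range he]
        exact mem_range.2 (Nat.mod_lt n ha)
      obtain ⟨t, ht, hte⟩ := mem_image.1 hres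
      rw [mem_range] at ht
      refine ⟨⟨t, n / a⟩, ⟨ht, ?_⟩, by rw [hte, Nat.mod_add_div]⟩
      rwa [hS n t ht hte.symm, not_le,
        Nat.lt_iff_div_lt_div_of_mod_eq ha (by rw [hw t ht, hte])] at hn
    · rintro ⟨⟨t, i⟩, ⟨ht, hi⟩, rfl⟩
      have hmod : (t * e % a + a * i) % a = t * e % a := by
        rw [Nat.add_mul_mod_self_left, Nat.mod_mod]
      rw [hS _ t ht hmod, not_le, Nat.lt_iff_div_lt_div_of_mod_eq ha (by rw [hmod, hw t ht]),
        Nat.add_mul_div_left _ _ ha, Nat.div_eq_of_lt (Nat.mod_lt _ ha), zero_add]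
      exact hi
  rw [hgaps, Set.ncard_coe_finset, card_image_of_injOn, card_sigma]
  · simp only [card_range]
  rintro ⟨t, i⟩ hti ⟨t', i'⟩ hti' heq
  simp only [coe_sigma, Set.mem_sigma_iff, mem_coe, mem_range] at hti hti' heq
  have hmod : t * e % a = t' * e % a := by
    simpa only [Nat.add_mul_mod_self_left, Nat.mod_mod] using congrArg (· % a) heq
  obtain rfl : t = t' :=
    Nat.injOn_mul_mod_range he (mem_range.2 hti.1) (mem_range.2 hti'.1) hmod
  obtain rfl : i = i' := Nat.eq_of_mul_eq_mul_left ha (by omega)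
  rfl

theorem AddSubmonoid.setOf_pos_and_notMem_eq_compl (S : AddSubmonoid ℕ) :
    {n : ℕ | 0 < n ∧ n ∉ S} = (S : Set ℕ)ᶜ := by
  ext n
  simp only [Set.mem_ofPred_eq, Set.mem_compl_iff, SetLike.mem_coe, and_iff_right_iff_imp]
  exact fun hn => Nat.pos_of_ne_zero fun h0 => hn (h0 ▸ S.zero_mem)

def arithSeqSemigroup (a d l u : ℕ) : AddSubmonoid ℕ :=
  AddSubmonoid.closure (insert a ((fun j => a + j * d) '' Set.Icc l u))

namespace arithSeqSemigroup

variable {a d l u : ℕ}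

theorem left_mem : a ∈ arithSeqSemigroup a d l u :=
  AddSubmonoid.subset_closure (Set.mem_insert a _)

theorem add_mul_mem {j : ℕ} (hj : j ∈ Set.Icc l u) : a + j * d ∈ arithSeqSemigroup a d l u :=
  AddSubmonoid.subset_closure (Set.mem_insert_of_mem _ ⟨j, hj, rfl⟩)

theorem mul_mem (p : ℕ) : p * a ∈ arithSeqSemigroup a d l u := by
  simpa only [smul_eq_mul] using nsmul_mem left_mem p

theorem mul_add_mul_mem {m s : ℕ} (hl : m * l ≤ s) (hu : s ≤ m * u) :
    m * a + s * d ∈ arithSeqSemigroup a d l u := by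
  induction m generalizing s with
  | zero =>
    obtain rfl : s = 0 := by omega
    simp
  | succ m ih =>
    rw [Nat.succ_mul] at hl hu
    have hlu : l ≤ u := by nlinarith
    -- peel off one generator `a + j * d`, with `j` as large as the remaining sum allows
    obtain ⟨j, hj⟩ : ∃ j, j = min u (s - m * l) := ⟨_, rfl⟩
    have hmlu : m * l ≤ m * u := Nat.mul_le_mul_left m hlu
    have hrest : m * a + (s - j) * d ∈ arithSeqSemigroup a d l u := ih (by omega) (by omega)
    convert add_mem hrest (add_mul_mem (d := d) (j := j) ⟨by omega, by omega⟩) using 1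
    have : j * d ≤ s * d := Nat.mul_le_mul_right d (by omega)
    rw [Nat.succ_mul, Nat.sub_mul]
    omega

theorem mem_iff {n : ℕ} : n ∈ arithSeqSemigroup a d l u ↔
    ∃ p m s, m * l ≤ s ∧ s ≤ m * u ∧ m ≤ p ∧ n = p * a + s * d := by
  constructor
  · intro hn
    induction hn using AddSubmonoid.closure_induction with
    | mem x hx =>
      rcases hx with rfl | ⟨j, ⟨hlj, hju⟩, rfl⟩
      · exact ⟨1, 0, 0, by simp, by simp, by simp, by ring⟩
      · exact ⟨1, 1, j, by simpa using hlj, by simpa using hju, le_rfl, by ring⟩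
    | zero => exact ⟨0, 0, 0, by simp, by simp, by simp, by simp⟩
    | add x y _ _ hx hy =>
      obtain ⟨p, m, s, h1, h2, h3, rfl⟩ := hx
      obtain ⟨p', m', s', h1', h2', h3', rfl⟩ := hy
      exact ⟨p + p', m + m', s + s', by nlinarith, by nlinarith, by omega, by ring⟩
  · rintro ⟨p, m, s, hl, hu, hmp, rfl⟩
    have hsplit : p * a + s * d = (p - m) * a + (m * a + s * d) := by
      rw [← add_assoc, ← add_mul, Nat.sub_add_cancel hmp]
    rw [hsplit]
    exact add_mem (mul_mem _) (mul_add_mul_mem hl hu)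

end arithSeqSemigroup

/-- `s t` above: the least `s ≡ t [MOD a]` with `s = 0 ∨ K < s`. -/
def minShift (a K t : ℕ) : ℕ := if t = 0 ∨ K < t then t else t + a

section Apery

variable {a d K k t : ℕ}

theorem minShift_mod : minShift a K t % a = t % a := by
  unfold minShift
  split_ifs
  · rfl
  · exact Nat.add_mod_right t a

theorem minShift_eq_zero_or_lt (hKa : K ≤ a) : minShift a K t = 0 ∨ K < minShift a K t := by
  unfold minShift
  split_ifs <;> omega

theorem minShift_le {s : ℕ} (hst : s % a = t) (hs : s = 0 ∨ K < s) :
    minShift a K t ≤ s := by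
  have hts : t ≤ s := hst ▸ Nat.mod_le s a
  unfold minShift
  split_ifs with h
  · exact hts
  · obtain ⟨c, hc⟩ : a ∣ s - t := hst ▸ Nat.dvd_sub_mod s
    rcases c with _ | c
    · omega
    · rw [mul_add, mul_one] at hc
      omega

def aperyElt (a d K k t : ℕ) : ℕ := minShift a K t ⌈/⌉ k * a + minShift a K t * d

theorem aperyElt_mod : aperyElt a d K k t % a = t * d % a := by
  rw [aperyElt, Nat.mul_comm _ a, Nat.mul_add_mod, Nat.mul_mod, minShift_mod, ← Nat.mul_mod]

theorem aperyElt_mem (hk : 2 * K < k) (hKa : K ≤ a) :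
    aperyElt a d K k t ∈ arithSeqSemigroup a d (K + 1) k :=
  arithSeqSemigroup.mul_add_mul_mem (ceilDiv_mul_succ_le hk (minShift_eq_zero_or_lt hKa))
    (by rw [mul_comm, ← smul_eq_mul]; exact le_smul_ceilDiv (by omega))

theorem aperyElt_le_of_mem (hgcd : a.Coprime d) (hk : 0 < k) (ht : t < a) {n : ℕ}
    (hn : n ∈ arithSeqSemigroup a d (K + 1) k) (hnt : n % a = t * d % a) :
    aperyElt a d K k t ≤ n := by
  obtain ⟨p, m, s, hl, hu, hmp, rfl⟩ := arithSeqSemigroup.mem_iff.1 hn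
  have hst : s % a = t := by
    have hsd : s * d ≡ t * d [MOD a] := by
      rw [Nat.ModEq, ← hnt, Nat.mul_comm p, Nat.mul_add_mod]
    rw [← Nat.mod_eq_of_lt ht]
    exact Nat.ModEq.cancel_right_of_coprime hgcd hsd
  have hs : s = 0 ∨ K < s := by
    rcases m with _ | m
    · omega
    · right; nlinarith
  have hshift : minShift a K t ≤ s := minShift_le hst hs
  have hceil : minShift a K t ⌈/⌉ k ≤ p :=
    (ceilDiv_le_iff_le_mul hk).2 (by nlinarith)
  unfold aperyElt
  nlinarith [Nat.mul_le_mul_right a hceil, Nat.mul_le_mul_right d hshift]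

theorem mem_iff_aperyElt_le (hgcd : a.Coprime d) (hk : 2 * K < k) (hKa : K ≤ a) (ht : t < a)
    {n : ℕ} (hnt : n % a = t * d % a) :
    n ∈ arithSeqSemigroup a d (K + 1) k ↔ aperyElt a d K k t ≤ n := by
  refine ⟨fun hn => aperyElt_le_of_mem hgcd (by omega) ht hn hnt, fun hle => ?_⟩
  obtain ⟨c, hc⟩ : a ∣ n - aperyElt a d K k t :=
    (Nat.modEq_iff_dvd' hle).1 (by rw [Nat.ModEq, hnt, aperyElt_mod])
  rw [← Nat.add_sub_cancel' hle, hc, mul_comm]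
  exact add_mem (aperyElt_mem hk hKa) (arithSeqSemigroup.mul_mem c)

theorem ncard_compl_arithSeqSemigroup (ha : 0 < a) (hgcd : a.Coprime d) (hk : 2 * K < k)
    (hKa : K ≤ a) :
    (arithSeqSemigroup a d (K + 1) k : Set ℕ)ᶜ.ncard = ∑ t ∈ range a, aperyElt a d K k t / a :=
  ncard_compl_eq_sum_div ha hgcd (fun _ _ => aperyElt_mod)
    (fun _ _ ht hnt => mem_iff_aperyElt_le hgcd hk hKa ht hnt)

end Apery

section Sums

variable {a d K k : ℕ}

theorem sum_Ico_minShift_add {M : Type*} [AddCommMonoid M] (f : ℕ → M) (hKa : K < a) :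
    ∑ t ∈ Ico 1 a, f (minShift a K t) + f a = ∑ u ∈ Ico (K + 1) (a + K + 1), f u := by
  have hlow :
      ∑ t ∈ Ico 1 (K + 1), f (minShift a K t) = ∑ u ∈ Ico (a + 1) (a + K + 1), f u := by
    rw [show a + K + 1 = K + 1 + a by ring, add_comm a 1, ← sum_Ico_add']
    refine sum_congr rfl fun t ht => ?_
    rw [mem_Ico] at ht
    rw [minShift, if_neg (by omega)]
  have hhigh : ∑ t ∈ Ico (K + 1) a, f (minShift a K t) = ∑ u ∈ Ico (K + 1) a, f u := by
    refine sum_congr rfl fun t ht => ?_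
    rw [mem_Ico] at ht
    rw [minShift, if_pos (by omega)]
  rw [← sum_Ico_consecutive _ (by omega : 1 ≤ K + 1) hKa, hlow, hhigh,
    ← sum_Ico_consecutive _ hKa (by omega : a ≤ a + K + 1),
    sum_eq_sum_Ico_succ_bot (by omega : a < a + K + 1)]
  abel

theorem sum_Ico_ceilDiv (hK : K < k) (N : ℕ) :
    ∑ u ∈ Ico (K + 1) (N + K + 1), u ⌈/⌉ k = N + ∑ u ∈ range (N + K), u / k := by
  have hstep (u : ℕ) : (u + 1) ⌈/⌉ k = u / k + 1 := by
    rw [Nat.ceilDiv_eq_add_pred_div, show u + 1 + k - 1 = u + k by omega,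
      Nat.add_div_right u (by omega)]
  rw [← sum_Ico_add', ← sum_range_add_sum_Ico _ (by omega : K ≤ N + K),
    sum_eq_zero fun u hu => Nat.div_eq_of_lt ((mem_range.1 hu).trans hK), zero_add,
    sum_congr rfl fun u _ => hstep u, sum_add_distrib, sum_const, Nat.card_Ico, smul_eq_mul,
    mul_one, Nat.add_sub_cancel, add_comm]

theorem sum_Ico_minShift_mul_div (hKa : K < a) :
    ∑ t ∈ Ico 1 a, minShift a K t * d / a = ∑ t ∈ range a, t * d / a + K * d := by
  have hterm :
      ∀ t ∈ Ico 1 a, minShift a K t * d / a = t * d / a + if t ≤ K then d else 0 := by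
    intro t ht
    rw [mem_Ico] at ht
    unfold minShift
    split_ifs <;> first
      | omega
      | rw [add_mul, Nat.add_mul_div_left _ _ (by omega)]
  rw [sum_congr rfl hterm, sum_add_distrib, sum_ite, sum_const_zero, add_zero, sum_const,
    smul_eq_mul, sum_range_eq_add_Ico _ (by omega : 0 < a), zero_mul, Nat.zero_div, zero_add]
  congr 2
  rw [show {t ∈ Ico 1 a | t ≤ K} = Ico 1 (K + 1) by
      ext; simp only [mem_filter, mem_Ico]; omega,
    Nat.card_Ico, Nat.add_sub_cancel]

theorem aperyElt_div (ha : 0 < a) (t : ℕ) :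
    aperyElt a d K k t / a = minShift a K t ⌈/⌉ k + minShift a K t * d / a := by
  rw [aperyElt, mul_comm _ a, Nat.mul_add_div ha]

theorem sum_aperyElt_div {q r : ℕ} (hKa : K < a) (hK : K < k) (h : a + K = k * q + r)
    (hrK : r ≤ K) :
    ∑ t ∈ range a, aperyElt a d K k t / a + q
      = a + ∑ u ∈ range (a + K), u / k + ∑ t ∈ range a, t * d / a + K * d := by
  have hceil := sum_Ico_minShift_add (fun u => u ⌈/⌉ k) hKa
  rw [sum_Ico_ceilDiv hK, ceilDiv_eq_of_add_eq h hrK hK] at hceil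
  have h0 : aperyElt a d K k 0 = 0 := by simp [aperyElt, minShift]
  rw [sum_range_eq_add_Ico _ (by omega : 0 < a), h0, Nat.zero_div, zero_add,
    sum_congr rfl fun t _ => aperyElt_div (by omega) t, sum_add_distrib,
    sum_Ico_minShift_mul_div hKa]
  omega

end Sums

theorem stmt8_general (a d K k r : ℕ) (ha : 2 ≤ a) (hd : 0 < d) (hk : 0 < k)
    (hgcd : Nat.gcd a d = 1) (hKk : 2 * K ≤ k - 1)
    (hr : r = a + K - ((a + K) / k) * k) (hrK : r ≤ K) :
    ({n : ℕ | 0 < n ∧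
        n ∉ AddSubmonoid.closure (insert a ((fun j => a + j * d) '' Set.Icc (K + 1) k))}.ncard : ℚ)
      = ((a : ℚ) ^ 2 + 2 * ((K : ℚ) - 1) * a + ((a : ℚ) + 2 * K - 1) * k * d
          + (K : ℚ) * ((K : ℚ) - k - 2) + k - (r : ℚ) * ((r : ℚ) - k - 2)) / (2 * k) := by
  set q := (a + K) / k
  have hk2 : 2 * K < k := by omega
  have hdiv : a + K = k * q + r := by
    have : q * k ≤ a + K := Nat.div_mul_le_self _ _
    rw [mul_comm]; omega
  have hq : 0 < q := Nat.pos_of_ne_zero fun h0 => by simp only [h0, mul_zero] at hdiv; omega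
  have hKa : K < a := by nlinarith
  change ({n : ℕ | 0 < n ∧ n ∉ arithSeqSemigroup a d (K + 1) k}.ncard : ℚ) = _
  rw [AddSubmonoid.setOf_pos_and_notMem_eq_compl,
    ncard_compl_arithSeqSemigroup (by omega) hgcd hk2 hKa.le,
    eq_div_iff (by positivity)]
  have hsum := sum_aperyElt_div (d := d) hKa (by omega) hdiv hrK
  have hfloor := Nat.two_mul_sum_range_div (q := q) (by omega : r ≤ k)
  rw [← hdiv] at hfloor
  have hgauss := Nat.two_mul_sum_range_mul_div hgcd
  generalize ∑ t ∈ range a, aperyElt a d K k t / a = X at hsum ⊢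
  generalize ∑ u ∈ range (a + K), u / k = F at hsum hfloor
  generalize ∑ t ∈ range a, t * d / a = G at hsum hgauss
  have ha1 : 1 ≤ a := by omega
  qify [ha1, hd] at hsum hfloor hgauss hdiv
  linear_combination 2 * k * hsum + k * hfloor + k * hgauss - (k * q + a + K + r - k - 2) * hdiv

theorem stmt8 (a d K k r : ℕ) (ha : 2 ≤ a) (hd : 0 < d) (hK : 0 < K) (hk : 0 < k)
    (hgcd : Nat.gcd a d = 1) (hKk : 2 * K ≤ k - 1)
    (hr : r = a + K - ((a + K) / k) * k) (hrK : r ≤ K) :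
    ({n : ℕ | 0 < n ∧
        n ∉ AddSubmonoid.closure (insert a ((fun j => a + j * d) '' Set.Icc (K + 1) k))}.ncard : ℚ)
      = ((a : ℚ) ^ 2 + 2 * ((K : ℚ) - 1) * a + ((a : ℚ) + 2 * K - 1) * k * d
          + (K : ℚ) * ((K : ℚ) - k - 2) + k - (r : ℚ) * ((r : ℚ) - k - 2)) / (2 * k) :=
  stmt8_general a d K k r ha hd hk hgcd hKk hr hrK
end

section
/- For every integer a ≥ 2, the Frobenius number of {a, a+2, a+3, a+4} equals (1 + ⌊a/4⌋)·a + 1. -/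
lemma aux34 (s k : ℕ) (h2 : 2 ≤ s) (h4 : s ≤ 4*k) :
    ∃ x y z, 2*x+3*y+4*z = s ∧ x+y+z ≤ k := by
  obtain ⟨q, r, hr, rfl⟩ : ∃ q r, r < 4 ∧ s = 4*q+r := ⟨s/4, s%4, by omega, by omega⟩
  interval_cases r
  · exact ⟨0,0,q, by omega, by omega⟩
  · exact ⟨1,1,q-1, by omega, by omega⟩
  · exact ⟨1,0,q, by omega, by omega⟩
  · exact ⟨0,1,q, by omega, by omega⟩

lemma rep34 (a k s : ℕ) (h2 : 2 ≤ s) (h4 : s ≤ 4*k) :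
    ∃ w x y z, k*a + s = a*w+(a+2)*x+(a+3)*y+(a+4)*z := by
  obtain ⟨x,y,z,hs,hk⟩ := aux34 s k h2 h4
  refine ⟨k - (x+y+z), x, y, z, ?_⟩
  have hw : k - (x+y+z) + x + y + z = k := by omega
  calc k*a + s = a * (k - (x+y+z) + x + y + z) + (2*x+3*y+4*z) := by
        rw [hw, hs]; ring
    _ = a*(k-(x+y+z)) + (a+2)*x+(a+3)*y+(a+4)*z := by ring

theorem stmt11 (a : ℕ) (ha : 2 ≤ a) :
    IsGreatest {n : ℕ | 0 < n ∧
        ¬ ∃ w x y z : ℕ, n = a * w + (a + 2) * x + (a + 3) * y + (a + 4) * z}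
      ((1 + a / 4) * a + 1) := by
  set b := a / 4 with hbdef
  have hb4 : 4*b ≤ a ∧ a ≤ 4*b + 3 := by omega
  constructor
  · refine ⟨Nat.succ_pos _, ?_⟩
    rintro ⟨w,x,y,z,h⟩
    have h' : (1+b)*a + 1 = a*(w+x+y+z) + (2*x+3*y+4*z) := by rw [h]; ring
    set k := w+x+y+z with hkdef
    rcases Nat.lt_trichotomy k (1+b) with hk | hk | hk
    · have m1 : a*(k+1) ≤ a*(1+b) := Nat.mul_le_mul_left a (by omega)
      have m2 : 2*x+3*y+4*z ≤ 4*k := by omega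
      have m3 : 4*k ≤ 4*b := by omega
      linarith [hb4.1]
    · rw [hk] at h'
      have hs1 : 2*x+3*y+4*z = 1 := by linarith
      omega
    · have m1 : a*(2+b) ≤ a*k := Nat.mul_le_mul_left a (by omega)
      linarith
  · intro n hn
    obtain ⟨hpos, hnrep⟩ := hn
    by_contra hlt
    push_neg at hlt
    apply hnrep
    obtain ⟨k, r, hr, hn'⟩ : ∃ k r, r < a ∧ a * k + r = n :=
      ⟨n / a, n % a, Nat.mod_lt _ (by omega), Nat.div_add_mod n a⟩
    by_cases hr0 : r = 0
    · refine ⟨k, 0, 0, 0, ?_⟩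
      simp
      linarith
    · by_cases hr1 : r = 1
      · have hk2 : 2 + b ≤ k := by
          by_contra hc
          push_neg at hc
          have := Nat.mul_le_mul_left a (show k ≤ 1 + b by omega)
          linarith
        obtain ⟨k', rfl⟩ : ∃ k', k = k' + 1 := ⟨k-1, by omega⟩
        obtain ⟨w,x,y,z,he⟩ := rep34 a k' (a+1) (by omega) (by omega)
        refine ⟨w,x,y,z, ?_⟩
        rw [← he]
        linarith
      · have hr2 : 2 ≤ r := by omega
        have hk1 : 1 + b ≤ k := by
          by_contra hc
          push_neg at hc
          have := Nat.mul_le_mul_left a (show k ≤ b by omega)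
          linarith
        obtain ⟨w,x,y,z,he⟩ := rep34 a k r hr2 (by omega)
        refine ⟨w,x,y,z, ?_⟩
        rw [← he]
        linarith
end

section
/- For every integer a ≥ 2, the number of positive integers not representable as a nonnegative integer combination of a, a+2, a+3, a+4 equals (a²+4a+8)/8 if a ≡ 0 (mod 4), (a²+4a+3)/8 if a ≡ 1 (mod 4), (a²+4a+4)/8 if a ≡ 2 (mod 4), and (a²+4a+3)/8 if a ≡ 3 (mod 4). -/
/-!
A sum of `k` of the generators `a, a + 2, a + 3, a + 4` is `a k + s`, where `s` ranges over
all of `[0, 4k]` except `1`. Writing `n = a q + r` with `r < a`, the windows `[a k, a k + 4k]` grow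
with `k`, so only `k = q` and `k = q - 1` matter: `n > 0` is a gap iff `r > 4q`, or `r = 1` and
`1 ≤ q ≤ (a + 4) / 4`. Hence the number of gaps is `∑_q (a - 4q - 1)⁺ + ⌊(a + 4) / 4⌋`, and both
this count and the claimed formula increase by `a + 4` when `a` is replaced by `a + 4`.
-/

open Finset

lemma exists_two_mul_add_three_mul_add_four_mul_eq {s k : ℕ} (hs : s ≤ 4 * k) (h1 : s ≠ 1) :
    ∃ x y z : ℕ, 2 * x + 3 * y + 4 * z = s ∧ x + y + z ≤ k := by
  obtain h | h | h | h : s % 4 = 0 ∨ s % 4 = 1 ∨ s % 4 = 2 ∨ s % 4 = 3 := by omega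
  · exact ⟨0, 0, s / 4, by omega⟩
  · exact ⟨1, 1, (s - 5) / 4, by omega⟩
  · exact ⟨1, 0, (s - 2) / 4, by omega⟩
  · exact ⟨0, 1, (s - 3) / 4, by omega⟩

lemma exists_combination_iff (a n : ℕ) :
    (∃ w x y z : ℕ, n = a * w + (a + 2) * x + (a + 3) * y + (a + 4) * z) ↔
      ∃ k, a * k ≤ n ∧ n ≤ a * k + 4 * k ∧ n ≠ a * k + 1 := by
  have regroup (w x y z : ℕ) : a * w + (a + 2) * x + (a + 3) * y + (a + 4) * z =
      a * (w + x + y + z) + (2 * x + 3 * y + 4 * z) := by ring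
  constructor
  · rintro ⟨w, x, y, z, rfl⟩
    exact ⟨w + x + y + z, by rw [regroup]; omega⟩
  · rintro ⟨k, hlo, hhi, hne⟩
    obtain ⟨x, y, z, hs, hk⟩ :=
      exists_two_mul_add_three_mul_add_four_mul_eq (s := n - a * k) (k := k) (by omega) (by omega)
    obtain ⟨w, rfl⟩ : ∃ w, k = w + x + y + z := ⟨k - (x + y + z), by omega⟩
    exact ⟨w, x, y, z, by rw [regroup]; omega⟩

lemma exists_combination_iff_div_mod {a n : ℕ} (ha : 2 ≤ a) :
    (∃ w x y z : ℕ, n = a * w + (a + 2) * x + (a + 3) * y + (a + 4) * z) ↔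
      (n % a ≤ 4 * (n / a) ∧ n % a ≠ 1) ∨ a + n % a + 4 ≤ 4 * (n / a) := by
  have hdm := Nat.div_add_mod n a
  have hr := Nat.mod_lt n (by omega : 0 < a)
  rw [exists_combination_iff]
  constructor
  · rintro ⟨k, hlo, hhi, hne⟩
    have hkq : k ≤ n / a := (Nat.le_div_iff_mul_le (by omega)).2 (by rwa [mul_comm])
    rcases hkq.eq_or_lt with rfl | hlt
    · omega
    · have : a * (k + 1) ≤ a * (n / a) := Nat.mul_le_mul_left a hlt
      rw [mul_add_one] at this
      omega
  · rintro (h | h)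
    · exact ⟨n / a, by omega⟩
    · obtain ⟨k, hk⟩ : ∃ k, n / a = k + 1 := ⟨n / a - 1, by omega⟩
      rw [hk, mul_add_one] at hdm
      rw [hk] at h
      exact ⟨k, by omega⟩

def gaps (a : ℕ) : Set ℕ :=
  {n | 0 < n ∧ ¬ ∃ w x y z : ℕ, n = a * w + (a + 2) * x + (a + 3) * y + (a + 4) * z}

lemma mem_gaps_iff {a n : ℕ} (ha : 2 ≤ a) :
    n ∈ gaps a ↔ 4 * (n / a) < n % a ∨ (n % a = 1 ∧ 1 ≤ n / a ∧ 4 * (n / a) ≤ a + 4) := by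
  rw [gaps, Set.mem_ofPred_eq, exists_combination_iff_div_mod ha]
  rcases Nat.eq_zero_or_pos n with rfl | hn
  · simp
  · omega

def gapBlocks (a : ℕ) : Finset ℕ :=
  (range a).biUnion fun q => Ioo (a * q + 4 * q) (a * q + a)

def gapPoints (a : ℕ) : Finset ℕ :=
  (Icc 1 ((a + 4) / 4)).image fun q => a * q + 1

lemma div_eq_and_mod_eq_of_le_of_lt {a q n : ℕ} (hlo : a * q ≤ n) (hhi : n < a * q + a) :
    n / a = q ∧ n % a = n - a * q :=
  (Nat.div_mod_unique (by omega)).2 ⟨by omega, by omega⟩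

lemma mem_gapBlocks_iff {a n : ℕ} (ha : 0 < a) : n ∈ gapBlocks a ↔ 4 * (n / a) < n % a := by
  simp only [gapBlocks, mem_biUnion, mem_range, mem_Ioo]
  constructor
  · rintro ⟨q, -, hlo, hhi⟩
    obtain ⟨hq, hr⟩ := div_eq_and_mod_eq_of_le_of_lt (by omega) hhi
    omega
  · intro h
    have := Nat.div_add_mod n a
    have := Nat.mod_lt n ha
    exact ⟨n / a, by omega, by omega, by omega⟩

lemma mem_gapPoints_iff {a n : ℕ} (ha : 2 ≤ a) :
    n ∈ gapPoints a ↔ n % a = 1 ∧ 1 ≤ n / a ∧ 4 * (n / a) ≤ a + 4 := by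
  simp only [gapPoints, mem_image, mem_Icc]
  constructor
  · rintro ⟨q, ⟨hq1, hq2⟩, rfl⟩
    obtain ⟨hq, hr⟩ : (a * q + 1) / a = q ∧ (a * q + 1) % a = 1 :=
      (Nat.div_mod_unique (by omega)).2 ⟨by omega, by omega⟩
    omega
  · rintro ⟨hr, hq1, hq2⟩
    have := Nat.div_add_mod n a
    exact ⟨n / a, ⟨hq1, by omega⟩, by omega⟩

lemma gaps_eq_gapBlocks_union_gapPoints {a : ℕ} (ha : 2 ≤ a) :
    gaps a = ↑(gapBlocks a ∪ gapPoints a) := by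
  ext n
  rw [mem_gaps_iff ha, coe_union, Set.mem_union, mem_coe, mem_coe,
    mem_gapBlocks_iff (by omega), mem_gapPoints_iff ha]

lemma disjoint_gapBlocks_gapPoints {a : ℕ} (ha : 2 ≤ a) :
    Disjoint (gapBlocks a) (gapPoints a) := by
  rw [disjoint_left]
  intro n hb hp
  rw [mem_gapBlocks_iff (by omega)] at hb
  rw [mem_gapPoints_iff ha] at hp
  omega

lemma card_gapBlocks (a : ℕ) : (gapBlocks a).card = ∑ q ∈ range a, (a - (4 * q + 1)) := by
  rw [gapBlocks, card_biUnion]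
  · exact sum_congr rfl fun q _ => by rw [Nat.card_Ioo]; omega
  · intro q _ q' _ hne
    rw [Function.onFun, disjoint_left]
    intro n hn hn'
    rw [mem_Ioo] at hn hn'
    exact hne ((div_eq_and_mod_eq_of_le_of_lt (by omega) hn.2).1.symm.trans
      (div_eq_and_mod_eq_of_le_of_lt (by omega) hn'.2).1)

lemma card_gapPoints {a : ℕ} (ha : 0 < a) : (gapPoints a).card = (a + 4) / 4 := by
  rw [gapPoints, card_image_of_injective _ fun q q' h => Nat.eq_of_mul_eq_mul_left ha
    (Nat.add_right_cancel h), Nat.card_Icc, Nat.add_sub_cancel]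

lemma eight_mul_sum_range_add_div_four : ∀ a : ℕ,
    8 * (∑ q ∈ range a, (a - (4 * q + 1)) + (a + 4) / 4) =
      a ^ 2 + 4 * a + if a % 4 = 0 then 8 else if a % 4 = 2 then 4 else 3
  | 0 | 1 | 2 | 3 => by decide
  | a + 4 => by
    have ih := eight_mul_sum_range_add_div_four a
    have hsum : ∑ q ∈ range (a + 4), (a + 4 - (4 * q + 1)) =
        ∑ q ∈ range a, (a - (4 * q + 1)) + (a + 3) := by
      have hshift (i : ℕ) : a + 4 - (4 * (i + 1) + 1) = a - (4 * i + 1) := by omega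
      rw [sum_range_succ']
      simp only [hshift]
      rw [sum_range_add, sum_eq_zero (s := range 3) fun i _ => by omega]
      omega
    rw [hsum, Nat.add_mod_right, show (a + 4 + 4) / 4 = (a + 4) / 4 + 1 by omega]
    linarith

lemma eight_mul_ncard_gaps {a : ℕ} (ha : 2 ≤ a) :
    8 * (gaps a).ncard = a ^ 2 + 4 * a + if a % 4 = 0 then 8 else if a % 4 = 2 then 4 else 3 := by
  rw [gaps_eq_gapBlocks_union_gapPoints ha, Set.ncard_coe_finset,
    card_union_of_disjoint (disjoint_gapBlocks_gapPoints ha), card_gapBlocks,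
    card_gapPoints (by omega), eight_mul_sum_range_add_div_four]

theorem stmt12 (a : ℕ) (ha : 2 ≤ a) :
    (a % 4 = 0 → {n : ℕ | 0 < n ∧
        ¬ ∃ w x y z : ℕ, n = a * w + (a + 2) * x + (a + 3) * y + (a + 4) * z}.ncard
        = (a ^ 2 + 4 * a + 8) / 8) ∧
    (a % 4 = 1 → {n : ℕ | 0 < n ∧
        ¬ ∃ w x y z : ℕ, n = a * w + (a + 2) * x + (a + 3) * y + (a + 4) * z}.ncard
        = (a ^ 2 + 4 * a + 3) / 8) ∧
    (a % 4 = 2 → {n : ℕ | 0 < n ∧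
        ¬ ∃ w x y z : ℕ, n = a * w + (a + 2) * x + (a + 3) * y + (a + 4) * z}.ncard
        = (a ^ 2 + 4 * a + 4) / 8) ∧
    (a % 4 = 3 → {n : ℕ | 0 < n ∧
        ¬ ∃ w x y z : ℕ, n = a * w + (a + 2) * x + (a + 3) * y + (a + 4) * z}.ncard
        = (a ^ 2 + 4 * a + 3) / 8) := by
  have h := eight_mul_ncard_gaps ha
  rw [gaps] at h
  split_ifs at h <;> omega
end

section
/- For every integer a ≥ 2, the sum of all positive integers not representable by a, a+2, a+3, a+4 equals (a+4)(a³+4a²+22a+24)/96 if a ≡ 0 (mod 4), (a+3)(a³+5a²+8a+34)/96 if a ≡ 1 (mod 4), (a+2)(a³+6a²+14a+36)/96 if a ≡ 2 (mod 4), and (a+5)(a³+3a²+8a+6)/96 if a ≡ 3 (mod 4). -/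
open Finset

lemma aux_rep (a k x y z : ℕ) (h : x + y + z ≤ k) :
    ∃ w : ℕ, a * w + (a + 2) * x + (a + 3) * y + (a + 4) * z = k * a + (2 * x + 3 * y + 4 * z) := by
  obtain ⟨w, hw⟩ := Nat.le.dest h
  exact ⟨w, by rw [← hw]; ring⟩

lemma rep_iff (a n : ℕ) :
    (∃ w x y z : ℕ, n = a * w + (a + 2) * x + (a + 3) * y + (a + 4) * z) ↔
    ∃ k : ℕ, k * a ≤ n ∧ n ≤ k * a + 4 * k ∧ n ≠ k * a + 1 := by
  constructor
  · rintro ⟨w, x, y, z, rfl⟩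
    refine ⟨w + x + y + z, ?_⟩
    have hn : a * w + (a + 2) * x + (a + 3) * y + (a + 4) * z
        = (w + x + y + z) * a + (2 * x + 3 * y + 4 * z) := by ring
    rw [hn]
    generalize (w + x + y + z) * a = b
    omega
  · rintro ⟨k, h1, h2, h3⟩
    obtain ⟨t, ht, ht4, ht1⟩ : ∃ t, n = k * a + t ∧ t ≤ 4 * k ∧ t ≠ 1 := ⟨n - k * a, by omega⟩
    obtain ⟨q, s, hqs, hs4⟩ : ∃ q s, t = 4 * q + s ∧ s < 4 :=
      ⟨t / 4, t % 4, (Nat.div_add_mod t 4).symm, Nat.mod_lt _ (by norm_num)⟩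
    interval_cases s
    · obtain ⟨w, hw⟩ := aux_rep a k 0 0 q (by omega)
      exact ⟨w, 0, 0, q, by rw [hw]; omega⟩
    · obtain ⟨w, hw⟩ := aux_rep a k 1 1 (q - 1) (by omega)
      exact ⟨w, 1, 1, q - 1, by rw [hw]; omega⟩
    · obtain ⟨w, hw⟩ := aux_rep a k 1 0 q (by omega)
      exact ⟨w, 1, 0, q, by rw [hw]; omega⟩
    · obtain ⟨w, hw⟩ := aux_rep a k 0 1 q (by omega)
      exact ⟨w, 0, 1, q, by rw [hw]; omega⟩

noncomputable def gapF (a : ℕ) : Finset ℕ :=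
  ((range ((a - 2) / 4 + 1)).biUnion fun k => Ioo (k * a + 4 * k) ((k + 1) * a)) ∪
    (Icc 1 ((a + 4) / 4)).image fun k => k * a + 1

lemma mem_gapF (a : ℕ) (ha : 2 ≤ a) (n : ℕ) :
    n ∈ gapF a ↔ 0 < n ∧ ¬ ∃ w x y z : ℕ, n = a * w + (a + 2) * x + (a + 3) * y + (a + 4) * z := by
  rw [rep_iff]
  constructor
  · intro hn
    simp only [gapF, mem_union, mem_biUnion, mem_image, mem_Ioo, mem_Icc, mem_range] at hn
    rcases hn with ⟨k, hkK, h1, h2⟩ | ⟨k, ⟨hk1, hkM⟩, rfl⟩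
    · have e : (k + 1) * a = k * a + a := by ring
      refine ⟨by omega, ?_⟩
      rintro ⟨k', e1, e2, e3⟩
      rcases le_or_gt k' k with h | h
      · have := Nat.mul_le_mul_right a h
        omega
      · have := Nat.mul_le_mul_right a (show k + 1 ≤ k' from h)
        omega
    · have hk4 : 4 * k ≤ a + 4 := by
        have := (Nat.le_div_iff_mul_le (by norm_num : 0 < 4)).mp hkM
        omega
      refine ⟨by omega, ?_⟩
      rintro ⟨k', e1, e2, e3⟩
      rcases lt_trichotomy k' k with h | rfl | h
      · obtain ⟨j, rfl⟩ : ∃ j, k = j + 1 := ⟨k - 1, by omega⟩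
        have h1 := Nat.mul_le_mul_right a (show k' ≤ j by omega)
        have e : (j + 1) * a = j * a + a := by ring
        omega
      · exact e3 rfl
      · have := Nat.mul_le_mul_right a (show k + 1 ≤ k' from h)
        have e : (k + 1) * a = k * a + a := by ring
        omega
  · rintro ⟨hpos, hnr⟩
    push_neg at hnr
    obtain ⟨k, hk⟩ : ∃ k, k = n / a := ⟨_, rfl⟩
    have ha0 : 0 < a := by omega
    have hk1 : k * a ≤ n := hk ▸ Nat.div_mul_le_self n a
    have hk2 : n < k * a + a := by
      have h1 := Nat.div_add_mod n a
      have h2 := Nat.mod_lt n ha0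
      have e : a * (n / a) = k * a := by rw [hk]; ring
      omega
    by_cases hbig : n ≤ k * a + 4 * k
    · have hn1 : n = k * a + 1 := hnr k hk1 hbig
      have hk0 : 1 ≤ k := by
        rcases Nat.eq_zero_or_pos k with rfl | h
        · simp at hbig; omega
        · exact h
      have hk4 : 4 * k ≤ a + 4 := by
        by_contra hc
        push_neg at hc
        obtain ⟨j, rfl⟩ : ∃ j, k = j + 1 := ⟨k - 1, by omega⟩
        have e : (j + 1) * a = j * a + a := by ring
        have hj := hnr j (by omega) (by omega)
        omega
      refine mem_union_right _ (mem_image.mpr ⟨k, mem_Icc.mpr ⟨hk0, ?_⟩, hn1.symm⟩)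
      exact (Nat.le_div_iff_mul_le (by norm_num : 0 < 4)).mpr (by omega)
    · push_neg at hbig
      have hkK : k < (a - 2) / 4 + 1 := by
        have h4 : k * 4 ≤ a - 2 := by omega
        have := (Nat.le_div_iff_mul_le (by norm_num : 0 < 4)).mpr h4
        omega
      refine mem_union_left _ (mem_biUnion.mpr ⟨k, mem_range.mpr hkK, mem_Ioo.mpr ⟨hbig, ?_⟩⟩)
      have e : (k + 1) * a = k * a + a := by ring
      omega

lemma two_sum_Ioo (b d : ℕ) : 2 * ∑ x ∈ Ioo b (b + 1 + d), x = d * (2 * b + d + 1) := by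
  have h1 : Ioo b (b + 1 + d) = Ico (b + 1) (b + 1 + d) := by ext x; simp [mem_Ioo, mem_Ico]
  rw [h1, Finset.sum_Ico_eq_sum_range]
  have h2 : b + 1 + d - (b + 1) = d := by omega
  rw [h2, Finset.sum_add_distrib, Finset.sum_const, smul_eq_mul, mul_add,
    mul_comm 2 (∑ i ∈ range d, i), Finset.sum_range_id_mul_two]
  cases d with
  | zero => simp
  | succ e => simp only [Nat.add_sub_cancel, Finset.card_range]; ring

lemma sumT (α : ℤ) (K : ℕ) :
    6 * ∑ k ∈ range K, ((α - 1 - 4 * (k : ℤ)) * ((2 * k + 1) * α + 4 * k)) =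
      6 * K * α ^ 2 - 6 * K * α + 3 * K * (K - 1) * (2 * α ^ 2 - 2 * α - 4)
        - (8 * α + 16) * K * (K - 1) * (2 * K - 1) := by
  induction K with
  | zero => simp
  | succ n ih =>
    rw [Finset.sum_range_succ, mul_add, ih]
    push_cast
    ring

lemma sumB (α : ℤ) (M : ℕ) :
    2 * ∑ k ∈ Icc 1 M, ((k : ℤ) * α + 1) = α * M * (M + 1) + 2 * M := by
  induction M with
  | zero => simp
  | succ n ih =>
    rw [Finset.sum_Icc_succ_top (by omega : 1 ≤ n + 1), mul_add, ih]
    push_cast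
    ring

lemma sum96 (a : ℕ) (ha : 2 ≤ a) :
    96 * ((∑ x ∈ gapF a, x : ℕ) : ℤ) =
      8 * (6 * (((a - 2) / 4 + 1 : ℕ) : ℤ) * (a : ℤ) ^ 2 - 6 * (((a - 2) / 4 + 1 : ℕ) : ℤ) * (a : ℤ)
        + 3 * (((a - 2) / 4 + 1 : ℕ) : ℤ) * ((((a - 2) / 4 + 1 : ℕ) : ℤ) - 1) * (2 * (a : ℤ) ^ 2 - 2 * (a : ℤ) - 4)
        - (8 * (a : ℤ) + 16) * (((a - 2) / 4 + 1 : ℕ) : ℤ) * ((((a - 2) / 4 + 1 : ℕ) : ℤ) - 1)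
          * (2 * (((a - 2) / 4 + 1 : ℕ) : ℤ) - 1))
      + 48 * ((a : ℤ) * (((a + 4) / 4 : ℕ) : ℤ) * ((((a + 4) / 4 : ℕ) : ℤ) + 1) + 2 * (((a + 4) / 4 : ℕ) : ℤ)) := by
  have ha0 : 0 < a := by omega
  have hdis : Disjoint ((range ((a - 2) / 4 + 1)).biUnion fun k => Ioo (k * a + 4 * k) ((k + 1) * a))
      ((Icc 1 ((a + 4) / 4)).image fun k => k * a + 1) := by
    rw [Finset.disjoint_left]
    intro x hx hx'
    simp only [mem_biUnion, mem_range, mem_Ioo] at hx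
    simp only [mem_image, mem_Icc] at hx'
    obtain ⟨k, -, h1, h2⟩ := hx
    obtain ⟨k', ⟨hk'1, -⟩, rfl⟩ := hx'
    rcases le_or_gt k' k with h | h
    · have := Nat.mul_le_mul_right a h
      omega
    · have := Nat.mul_le_mul_right a (show k + 1 ≤ k' from h)
      have e : (k + 1) * a = k * a + a := by ring
      omega
  have hpd : Set.PairwiseDisjoint ↑(range ((a - 2) / 4 + 1))
      (fun k => Ioo (k * a + 4 * k) ((k + 1) * a)) := by
    have key : ∀ i j : ℕ, i < j →
        Disjoint (Ioo (i * a + 4 * i) ((i + 1) * a)) (Ioo (j * a + 4 * j) ((j + 1) * a)) := by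
      intro i j hij
      rw [Finset.disjoint_left]
      intro x hx hx'
      simp only [mem_Ioo] at hx hx'
      have := Nat.mul_le_mul_right a (show i + 1 ≤ j from hij)
      omega
    intro i hi j hj hij
    rcases lt_or_gt_of_ne hij with h | h
    · exact key i j h
    · exact (key j i h).symm
  have hinj : ∀ x ∈ Icc 1 ((a + 4) / 4), ∀ y ∈ Icc 1 ((a + 4) / 4), x * a + 1 = y * a + 1 → x = y := by
    intro x _ y _ hxy
    exact Nat.eq_of_mul_eq_mul_right ha0 (by omega)
  have hsum : (∑ x ∈ gapF a, x) =
      (∑ k ∈ range ((a - 2) / 4 + 1), ∑ x ∈ Ioo (k * a + 4 * k) ((k + 1) * a), x)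
        + ∑ k ∈ Icc 1 ((a + 4) / 4), (k * a + 1) := by
    rw [gapF, Finset.sum_union hdis, Finset.sum_biUnion hpd, Finset.sum_image hinj]
  have hAk : ∀ k ∈ range ((a - 2) / 4 + 1),
      (2 : ℤ) * ((∑ x ∈ Ioo (k * a + 4 * k) ((k + 1) * a), x : ℕ) : ℤ)
        = ((a : ℤ) - 1 - 4 * k) * ((2 * k + 1) * (a : ℤ) + 4 * k) := by
    intro k hk
    have hk4 : 4 * k + 2 ≤ a := by
      rw [mem_range] at hk
      have := (Nat.le_div_iff_mul_le (by norm_num : 0 < 4)).mp (show k ≤ (a - 2) / 4 by omega)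
      omega
    have e : (k + 1) * a = k * a + a := by ring
    obtain ⟨d, hd⟩ : ∃ d, (k + 1) * a = (k * a + 4 * k) + 1 + d := ⟨a - 4 * k - 1, by omega⟩
    have hnat : 2 * ∑ x ∈ Ioo (k * a + 4 * k) ((k + 1) * a), x
        = d * (2 * (k * a + 4 * k) + d + 1) := by rw [hd]; exact two_sum_Ioo _ _
    have hz := congrArg (Nat.cast : ℕ → ℤ) hnat
    push_cast at hz
    have hdz : (d : ℤ) = (a : ℤ) - 4 * (k : ℤ) - 1 := by omega
    rw [Nat.cast_sum]
    rw [hz, hdz]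
    ring
  have hAz : (2 : ℤ) * ((∑ k ∈ range ((a - 2) / 4 + 1), ∑ x ∈ Ioo (k * a + 4 * k) ((k + 1) * a), x : ℕ) : ℤ)
      = ∑ k ∈ range ((a - 2) / 4 + 1), (((a : ℤ) - 1 - 4 * k) * ((2 * k + 1) * (a : ℤ) + 4 * k)) := by
    rw [Nat.cast_sum, Finset.mul_sum]
    exact Finset.sum_congr rfl hAk
  have h1 : 6 * ((2 : ℤ) * ((∑ k ∈ range ((a - 2) / 4 + 1), ∑ x ∈ Ioo (k * a + 4 * k) ((k + 1) * a), x : ℕ) : ℤ))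
      = 6 * (((a - 2) / 4 + 1 : ℕ) : ℤ) * (a : ℤ) ^ 2 - 6 * (((a - 2) / 4 + 1 : ℕ) : ℤ) * (a : ℤ)
        + 3 * (((a - 2) / 4 + 1 : ℕ) : ℤ) * ((((a - 2) / 4 + 1 : ℕ) : ℤ) - 1) * (2 * (a : ℤ) ^ 2 - 2 * (a : ℤ) - 4)
        - (8 * (a : ℤ) + 16) * (((a - 2) / 4 + 1 : ℕ) : ℤ) * ((((a - 2) / 4 + 1 : ℕ) : ℤ) - 1)
          * (2 * (((a - 2) / 4 + 1 : ℕ) : ℤ) - 1) := by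
    rw [hAz]
    exact sumT (a : ℤ) _
  have h2 : (2 : ℤ) * ((∑ k ∈ Icc 1 ((a + 4) / 4), (k * a + 1) : ℕ) : ℤ)
      = (a : ℤ) * (((a + 4) / 4 : ℕ) : ℤ) * ((((a + 4) / 4 : ℕ) : ℤ) + 1) + 2 * (((a + 4) / 4 : ℕ) : ℤ) := by
    have e : ∑ k ∈ Icc 1 ((a + 4) / 4), (((k * a + 1 : ℕ)) : ℤ)
        = ∑ k ∈ Icc 1 ((a + 4) / 4), ((k : ℤ) * (a : ℤ) + 1) :=
      Finset.sum_congr rfl (fun k _ => by push_cast; ring)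
    rw [Nat.cast_sum, e]
    exact sumB (a : ℤ) ((a + 4) / 4)
  rw [hsum, Nat.cast_add]
  linear_combination 8 * h1 + 48 * h2

theorem stmt13 (a : ℕ) (ha : 2 ≤ a) :
    (a % 4 = 0 → (∑ᶠ n ∈ {n : ℕ | 0 < n ∧
        ¬ ∃ w x y z : ℕ, n = a * w + (a + 2) * x + (a + 3) * y + (a + 4) * z}, n)
        = (a + 4) * (a ^ 3 + 4 * a ^ 2 + 22 * a + 24) / 96) ∧
    (a % 4 = 1 → (∑ᶠ n ∈ {n : ℕ | 0 < n ∧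
        ¬ ∃ w x y z : ℕ, n = a * w + (a + 2) * x + (a + 3) * y + (a + 4) * z}, n)
        = (a + 3) * (a ^ 3 + 5 * a ^ 2 + 8 * a + 34) / 96) ∧
    (a % 4 = 2 → (∑ᶠ n ∈ {n : ℕ | 0 < n ∧
        ¬ ∃ w x y z : ℕ, n = a * w + (a + 2) * x + (a + 3) * y + (a + 4) * z}, n)
        = (a + 2) * (a ^ 3 + 6 * a ^ 2 + 14 * a + 36) / 96) ∧
    (a % 4 = 3 → (∑ᶠ n ∈ {n : ℕ | 0 < n ∧
        ¬ ∃ w x y z : ℕ, n = a * w + (a + 2) * x + (a + 3) * y + (a + 4) * z}, n)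
        = (a + 5) * (a ^ 3 + 3 * a ^ 2 + 8 * a + 6) / 96) := by
  have hset : {n : ℕ | 0 < n ∧
      ¬ ∃ w x y z : ℕ, n = a * w + (a + 2) * x + (a + 3) * y + (a + 4) * z} = ↑(gapF a) := by
    ext n
    simp only [Set.mem_setOf_eq, Finset.mem_coe, mem_gapF a ha n]
  rw [hset, finsum_mem_coe_finset]
  have h96 := sum96 a ha
  refine ⟨?_, ?_, ?_, ?_⟩
  · intro hr
    obtain ⟨m, rfl⟩ : ∃ m, a = 4 * m + 0 := ⟨a / 4, by omega⟩
    have hK : (4 * m + 0 - 2) / 4 + 1 = m := by omega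
    have hM : (4 * m + 0 + 4) / 4 = m + 1 := by omega
    rw [hK, hM] at h96
    have hnum : (4 * m + 0 + 4) * ((4 * m + 0) ^ 3 + 4 * (4 * m + 0) ^ 2 + 22 * (4 * m + 0) + 24)
        = 96 * ∑ x ∈ gapF (4 * m + 0), x := by
      have : ((4 * m + 0 + 4) * ((4 * m + 0) ^ 3 + 4 * (4 * m + 0) ^ 2 + 22 * (4 * m + 0) + 24) : ℤ)
          = 96 * ((∑ x ∈ gapF (4 * m + 0), x : ℕ) : ℤ) := by
        rw [h96]; push_cast; ring
      exact_mod_cast this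
    omega
  · intro hr
    obtain ⟨m, rfl⟩ : ∃ m, a = 4 * m + 1 := ⟨a / 4, by omega⟩
    have hK : (4 * m + 1 - 2) / 4 + 1 = m := by omega
    have hM : (4 * m + 1 + 4) / 4 = m + 1 := by omega
    rw [hK, hM] at h96
    have hnum : (4 * m + 1 + 3) * ((4 * m + 1) ^ 3 + 5 * (4 * m + 1) ^ 2 + 8 * (4 * m + 1) + 34)
        = 96 * ∑ x ∈ gapF (4 * m + 1), x := by
      have : ((4 * m + 1 + 3) * ((4 * m + 1) ^ 3 + 5 * (4 * m + 1) ^ 2 + 8 * (4 * m + 1) + 34) : ℤ)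
          = 96 * ((∑ x ∈ gapF (4 * m + 1), x : ℕ) : ℤ) := by
        rw [h96]; push_cast; ring
      exact_mod_cast this
    omega
  · intro hr
    obtain ⟨m, rfl⟩ : ∃ m, a = 4 * m + 2 := ⟨a / 4, by omega⟩
    have hK : (4 * m + 2 - 2) / 4 + 1 = m + 1 := by omega
    have hM : (4 * m + 2 + 4) / 4 = m + 1 := by omega
    rw [hK, hM] at h96
    have hnum : (4 * m + 2 + 2) * ((4 * m + 2) ^ 3 + 6 * (4 * m + 2) ^ 2 + 14 * (4 * m + 2) + 36)
        = 96 * ∑ x ∈ gapF (4 * m + 2), x := by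
      have : ((4 * m + 2 + 2) * ((4 * m + 2) ^ 3 + 6 * (4 * m + 2) ^ 2 + 14 * (4 * m + 2) + 36) : ℤ)
          = 96 * ((∑ x ∈ gapF (4 * m + 2), x : ℕ) : ℤ) := by
        rw [h96]; push_cast; ring
      exact_mod_cast this
    omega
  · intro hr
    obtain ⟨m, rfl⟩ : ∃ m, a = 4 * m + 3 := ⟨a / 4, by omega⟩
    have hK : (4 * m + 3 - 2) / 4 + 1 = m + 1 := by omega
    have hM : (4 * m + 3 + 4) / 4 = m + 1 := by omega
    rw [hK, hM] at h96
    have hnum : (4 * m + 3 + 5) * ((4 * m + 3) ^ 3 + 3 * (4 * m + 3) ^ 2 + 8 * (4 * m + 3) + 6)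
        = 96 * ∑ x ∈ gapF (4 * m + 3), x := by
      have : ((4 * m + 3 + 5) * ((4 * m + 3) ^ 3 + 3 * (4 * m + 3) ^ 2 + 8 * (4 * m + 3) + 6) : ℤ)
          = 96 * ((∑ x ∈ gapF (4 * m + 3), x : ℕ) : ℤ) := by
        rw [h96]; push_cast; ring
      exact_mod_cast this
    omega
end

section
/- For every integer a ≥ 3, the Frobenius number of {a, a+3, a+4, a+5} equals (1 + ⌊(a+1)/5⌋)·a + 2. -/
lemma aux345 (s : ℕ) : ∀ m, 3 ≤ s → s ≤ 5*m →
    ∃ x y z : ℕ, s = 3*x+4*y+5*z ∧ x+y+z ≤ m := by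
  induction s using Nat.strong_induction_on with
  | _ s ih =>
    intro m h3 h5
    by_cases h : s ≤ 7
    · interval_cases s
      · exact ⟨1,0,0, by omega, by omega⟩
      · exact ⟨0,1,0, by omega, by omega⟩
      · exact ⟨0,0,1, by omega, by omega⟩
      · exact ⟨2,0,0, by omega, by omega⟩
      · exact ⟨1,1,0, by omega, by omega⟩
    · obtain ⟨x,y,z,h1,h2⟩ := ih (s-5) (by omega) (m-1) (by omega) (by omega)
      exact ⟨x,y,z+1, by omega, by omega⟩

theorem stmt14 (a : ℕ) (ha : 3 ≤ a) :
    IsGreatest {n : ℕ | 0 < n ∧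
        ¬ ∃ w x y z : ℕ, n = a * w + (a + 3) * x + (a + 4) * y + (a + 5) * z}
      ((1 + (a + 1) / 5) * a + 2) := by
  set q := (a+1)/5 with hq
  have hq1 : 5*q ≤ a+1 := by omega
  have hq2 : a+1 < 5*q+5 := by omega
  constructor
  · refine ⟨by positivity, ?_⟩
    rintro ⟨w,x,y,z,h⟩
    have hm : (1+q)*a+2 = (w+x+y+z)*a + (3*x+4*y+5*z) := by rw [h]; ring
    set m := w+x+y+z with hmdef
    rcases lt_trichotomy m (q+1) with hc|hc|hc
    · have h5 : 3*x+4*y+5*z ≤ 5*m := by omega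
      have hma : m*a ≤ q*a := Nat.mul_le_mul_right a (by omega)
      have he1 : (1+q)*a = q*a + a := by ring
      nlinarith [hm, hma, h5, hq1, ha, hc]
    · rw [hc] at hm
      have he1 : (1+q)*a = (q+1)*a := by ring
      have hs : 3*x+4*y+5*z = 2 := by linarith [hm]
      omega
    · have hma : (q+2)*a ≤ m*a := Nat.mul_le_mul_right a (by omega)
      have he1 : (q+2)*a = (1+q)*a + a := by ring
      have hnn : 0 ≤ 3*x+4*y+5*z := Nat.zero_le _
      linarith [hm, hma]
  · rintro n ⟨hn0, hnr⟩
    by_contra hgt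
    push_neg at hgt
    apply hnr
    have han : (1+q)*a + 3 ≤ n := by omega
    have hapos : 0 < a := by omega
    obtain ⟨d, hd⟩ : ∃ d, n = d + 3 := ⟨n-3, by omega⟩
    set m := d / a with hmdef
    set r := d % a with hrdef
    have hd2 : d = a*m + r := (Nat.div_add_mod d a).symm
    have hra : r < a := Nat.mod_lt _ hapos
    have hmq : q+1 ≤ m := by
      rw [hmdef, Nat.le_div_iff_mul_le hapos]
      calc (q+1)*a = (1+q)*a := by ring
        _ ≤ d := by linarith
    have h5m : a + 2 ≤ 5*m := by omega
    obtain ⟨x,y,z,he,hle⟩ := aux345 (r+3) m (by omega) (by omega)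
    refine ⟨m - (x+y+z), x, y, z, ?_⟩
    have hw : m-(x+y+z)+(x+y+z) = m := by omega
    calc n = a*m + (r+3) := by rw [hd, hd2]; ring
      _ = a*((m-(x+y+z))+(x+y+z)) + (3*x+4*y+5*z) := by rw [hw, ← he]
      _ = a*(m-(x+y+z)) + (a+3)*x+(a+4)*y+(a+5)*z := by ring
end

section
/- For every integer a ≥ 3, the number of positive integers not representable by a, a+3, a+4, a+5 equals (a²+7a+20)/10 if a ≡ 0 (mod 5), (a²+7a+12)/10 if a ≡ 1 or 2 (mod 5), (a²+7a+10)/10 if a ≡ 3 (mod 5), and (a²+7a+16)/10 if a ≡ 4 (mod 5). -/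
/-!
Write `n = a q + j` with `0 ≤ j < a`. Since `a + 3, a + 4, a + 5` are `a` plus a part from
`{3, 4, 5}`, and `k` such parts sum to exactly the numbers in `[3k, 5k]`, `n` is representable iff
`n = a m + r` with `r = 0` or `3 ≤ r ≤ 5 m`. For `3 ≤ j` this means `j ≤ 5 q`, so the residue class
of `j` contains `⌈j / 5⌉` gaps; for `j ∈ {1, 2}` one `a` must be moved into `r`, the condition
becomes `a + j ≤ 5 (q - 1)`, and the class contains `⌈(a + j) / 5⌉ + 1` gaps. Summing over `j`, with
`∑_{j < n} ⌈j / 5⌉ = ⌊(n + 1)(n + 2) / 10⌋`, gives the formula.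
-/

open Finset

namespace ThreeFourFive

theorem exists_sum_three_four_five_iff (k r : ℕ) :
    (∃ x y z : ℕ, x + y + z = k ∧ 3 * x + 4 * y + 5 * z = r) ↔ 3 * k ≤ r ∧ r ≤ 5 * k := by
  refine ⟨fun ⟨x, y, z, hk, hr⟩ => by omega, fun hr => ?_⟩
  induction k generalizing r with
  | zero => exact ⟨0, 0, 0, rfl, by omega⟩
  | succ k ih =>
    rcases (by omega : r ≤ 5 * k + 3 ∨ r = 5 * k + 4 ∨ r = 5 * k + 5) with h | h | h
    · obtain ⟨x, y, z, hk, hr'⟩ := ih (r - 3) (by omega)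
      exact ⟨x + 1, y, z, by omega, by omega⟩
    · obtain ⟨x, y, z, hk, hr'⟩ := ih (r - 4) (by omega)
      exact ⟨x, y + 1, z, by omega, by omega⟩
    · obtain ⟨x, y, z, hk, hr'⟩ := ih (r - 5) (by omega)
      exact ⟨x, y, z + 1, by omega, by omega⟩

def Representable (a n : ℕ) : Prop :=
  ∃ w x y z : ℕ, n = a * w + (a + 3) * x + (a + 4) * y + (a + 5) * z

theorem representable_iff {a n : ℕ} :
    Representable a n ↔ ∃ m r, n = a * m + r ∧ (r = 0 ∨ 3 ≤ r ∧ r ≤ 5 * m) := by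
  constructor
  · rintro ⟨w, x, y, z, rfl⟩
    refine ⟨w + x + y + z, 3 * x + 4 * y + 5 * z, by ring, ?_⟩
    by_cases h : x + y + z = 0
    · left; omega
    · right; omega
  · rintro ⟨m, r, rfl, hr⟩
    obtain ⟨k, hkm, hk⟩ : ∃ k, k ≤ m ∧ 3 * k ≤ r ∧ r ≤ 5 * k := ⟨(r + 4) / 5, by omega, by omega⟩
    obtain ⟨x, y, z, rfl, rfl⟩ := (exists_sum_three_four_five_iff k r).2 hk
    exact ⟨m - (x + y + z), x, y, z, by
      conv_lhs => rw [← Nat.sub_add_cancel hkm]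
      ring⟩

theorem representable_mul_add_iff {a q j : ℕ} (hj : 0 < j) (hja : j < a) :
    Representable a (a * q + j) ↔ (3 ≤ j ∧ j ≤ 5 * q) ∨ a + j + 5 ≤ 5 * q := by
  rw [representable_iff]
  constructor
  · rintro ⟨m, r, h, hr⟩
    have hmq : m ≤ q := by
      have : a * m < a * (q + 1) := by rw [mul_add_one]; omega
      exact Nat.lt_succ_iff.1 (Nat.lt_of_mul_lt_mul_left this)
    rcases hmq.eq_or_lt with rfl | hmq
    · omega
    · have : a * (m + 1) ≤ a * q := Nat.mul_le_mul_left a hmq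
      rw [mul_add_one] at this
      omega
  · rintro (hq | hq)
    · exact ⟨q, j, rfl, Or.inr hq⟩
    · obtain ⟨q, rfl⟩ : ∃ q', q = q' + 1 := ⟨q - 1, by omega⟩
      exact ⟨q, a + j, by ring, Or.inr (by omega)⟩

def gapCount (a j : ℕ) : ℕ := if j ≤ 2 then (a + j + 4) / 5 + 1 else (j + 4) / 5

theorem representable_mul_add_iff_gapCount_le {a q j : ℕ} (hj : 0 < j) (hja : j < a) :
    Representable a (a * q + j) ↔ gapCount a j ≤ q := by
  rw [representable_mul_add_iff hj hja, gapCount]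
  split_ifs <;> omega

theorem representable_mul (a q : ℕ) : Representable a (a * q) :=
  representable_iff.2 ⟨q, 0, rfl, Or.inl rfl⟩

theorem eq_of_mul_add_eq_mul_add {a q q' j j' : ℕ} (hj : j < a) (hj' : j' < a)
    (h : a * q + j = a * q' + j') : q = q' ∧ j = j' := by
  have ha : 0 < a := by omega
  obtain ⟨hq, hj⟩ := (Nat.div_mod_unique ha).2 ⟨(add_comm _ _).trans h, hj⟩
  obtain ⟨hq', hj'⟩ := (Nat.div_mod_unique ha).2 ⟨add_comm _ _, hj'⟩
  exact ⟨hq.symm.trans hq', hj.symm.trans hj'⟩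

theorem gaps_eq_image {a : ℕ} (ha : 0 < a) :
    {n | 0 < n ∧ ¬ Representable a n} =
      ((Ico 1 a).sigma fun j => range (gapCount a j)).image (fun p => a * p.2 + p.1) := by
  ext n
  simp only [Set.mem_ofPred_eq, coe_image, coe_sigma, Set.mem_image, Set.mem_sigma_iff,
    coe_Ico, coe_range, Set.mem_Ico, Set.mem_Iio]
  constructor
  · rintro ⟨hn, hrep⟩
    have hdm := Nat.div_add_mod n a
    have hj : n % a ≠ 0 := fun h0 => hrep <| by
      rw [← hdm, h0, add_zero]
      exact representable_mul a _
    refine ⟨⟨n % a, n / a⟩, ⟨⟨Nat.one_le_iff_ne_zero.2 hj, Nat.mod_lt n ha⟩, ?_⟩, hdm⟩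
    rw [← hdm, representable_mul_add_iff_gapCount_le (Nat.pos_of_ne_zero hj) (Nat.mod_lt n ha)]
      at hrep
    exact not_le.1 hrep
  · rintro ⟨⟨j, q⟩, ⟨⟨hj, hja⟩, hq⟩, rfl⟩
    refine ⟨by omega, ?_⟩
    rw [representable_mul_add_iff_gapCount_le hj hja]
    omega

theorem ncard_gaps {a : ℕ} (ha : 0 < a) :
    {n | 0 < n ∧ ¬ Representable a n}.ncard = ∑ j ∈ Ico 1 a, gapCount a j := by
  rw [gaps_eq_image ha, Set.ncard_coe_finset, card_image_of_injOn, card_sigma]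
  · simp only [card_range]
  · rintro ⟨j, q⟩ hjq ⟨j', q'⟩ hjq' h
    simp only [coe_sigma, Set.mem_sigma_iff, coe_Ico, Set.mem_Ico] at hjq hjq'
    obtain ⟨rfl, rfl⟩ := eq_of_mul_add_eq_mul_add hjq.1.2 hjq'.1.2 h
    rfl

theorem sum_range_ceil_div_five (n : ℕ) : ∑ j ∈ range n, (j + 4) / 5 = (n + 1) * (n + 2) / 10 := by
  induction n using Nat.strong_induction_on with
  | _ n ih =>
    rcases lt_or_ge n 5 with hn | hn
    · interval_cases n <;> rfl
    · obtain ⟨n, rfl⟩ : ∃ m, n = m + 5 := ⟨n - 5, by omega⟩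
      have hstep : (n + 6) * (n + 7) = (n + 1) * (n + 2) + 10 * (n + 4) := by ring
      simp only [sum_range_succ, ih n (by omega), hstep,
        Nat.add_mul_div_left _ _ (by norm_num : 0 < 10)]
      omega

theorem sum_gapCount {a : ℕ} (ha : 3 ≤ a) :
    ∑ j ∈ Ico 1 a, gapCount a j = (a + 5) / 5 + (a + 6) / 5 + (a + 1) * (a + 2) / 10 := by
  have hsplit := sum_range_add_sum_Ico (fun j => (j + 4) / 5) ha
  rw [sum_range_ceil_div_five, sum_range_ceil_div_five] at hsplit
  have hlow : ∑ j ∈ Ico 1 3, gapCount a j = (a + 5) / 5 + 1 + ((a + 6) / 5 + 1) := rfl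
  rw [← sum_Ico_consecutive _ (by omega : 1 ≤ 3) ha, hlow, sum_congr rfl fun j hj =>
    show gapCount a j = (j + 4) / 5 from if_neg (by simp only [mem_Ico] at hj; omega)]
  omega

end ThreeFourFive

theorem stmt15 (a : ℕ) (ha : 3 ≤ a) :
    (a % 5 = 0 → {n : ℕ | 0 < n ∧
        ¬ ∃ w x y z : ℕ, n = a * w + (a + 3) * x + (a + 4) * y + (a + 5) * z}.ncard
        = (a ^ 2 + 7 * a + 20) / 10) ∧
    (a % 5 = 1 ∨ a % 5 = 2 → {n : ℕ | 0 < n ∧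
        ¬ ∃ w x y z : ℕ, n = a * w + (a + 3) * x + (a + 4) * y + (a + 5) * z}.ncard
        = (a ^ 2 + 7 * a + 12) / 10) ∧
    (a % 5 = 3 → {n : ℕ | 0 < n ∧
        ¬ ∃ w x y z : ℕ, n = a * w + (a + 3) * x + (a + 4) * y + (a + 5) * z}.ncard
        = (a ^ 2 + 7 * a + 10) / 10) ∧
    (a % 5 = 4 → {n : ℕ | 0 < n ∧
        ¬ ∃ w x y z : ℕ, n = a * w + (a + 3) * x + (a + 4) * y + (a + 5) * z}.ncard
        = (a ^ 2 + 7 * a + 16) / 10) := by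
  have hcount : {n : ℕ | 0 < n ∧ ¬ ThreeFourFive.Representable a n}.ncard
      = (a + 5) / 5 + (a + 6) / 5 + (a ^ 2 + 3 * a + 2) / 10 := by
    rw [ThreeFourFive.ncard_gaps (by omega), ThreeFourFive.sum_gapCount ha,
      show (a + 1) * (a + 2) = a ^ 2 + 3 * a + 2 by ring]
  -- `a ^ 2 mod 10` is determined by `a mod 5`, since `a ^ 2 + a` is even
  have hsq5 : a ^ 2 % 5 = (a % 5) ^ 2 % 5 := Nat.pow_mod a 2 5
  have hsq2 : (a ^ 2 + a) % 2 = 0 :=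
    Nat.even_iff.1 (by convert Nat.even_mul_succ_self a using 1; ring)
  simp only [ThreeFourFive.Representable] at hcount
  rw [hcount]
  rcases (by omega : a % 5 = 0 ∨ a % 5 = 1 ∨ a % 5 = 2 ∨ a % 5 = 3 ∨ a % 5 = 4)
    with h | h | h | h | h <;> rw [h] at hsq5 <;> norm_num at hsq5 <;> omega
end

section
/- For every integer a ≥ 3, the sum of all positive integers not representable by a, a+3, a+4, a+5 equals (a+5)(a³+8a²+55a+90)/150 if a ≡ 0 (mod 5), (a+4)(a³+9a²+35a+105)/150 if a ≡ 1 (mod 5), (a+3)(a³+10a²+41a+110)/150 if a ≡ 2 (mod 5), (a+2)(a³+11a²+43a+105)/150 if a ≡ 3 (mod 5), and (a+6)(a³+7a²+41a+65)/150 if a ≡ 4 (mod 5). -/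
open Finset

/-- Gauss sum over an interval. -/
lemma gaussIcc16 : ∀ d L : ℕ, (∑ i ∈ Finset.Icc L (L + d), i) * 2 = (d + 1) * (2 * L + d) := by
  intro d
  induction d with
  | zero => intro L; simp; ring
  | succ d ih =>
    intro L
    rw [show L + (d+1) = (L+d) + 1 by ring, Finset.sum_Icc_succ_top (by omega), add_mul, ih]
    ring

lemma sumIccSdiff16 (L M c : ℕ) (h1 : L ≤ c) (h2 : c ≤ M) :
    (∑ n ∈ Finset.Icc L M \ {c}, n) * 2 + c * 2 = (M + 1 - L) * (L + M) := by
  have hsub : {c} ⊆ Finset.Icc L M := by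
    simp [Finset.singleton_subset_iff, Finset.mem_Icc]; omega
  have h3 := Finset.sum_sdiff (f := fun n => n) hsub
  have h4 := gaussIcc16 (M - L) L
  rw [show L + (M - L) = M by omega] at h4
  rw [show (M + 1 - L) = (M - L) + 1 by omega, show L + M = 2 * L + (M - L) by omega]
  simp at h3
  linarith

lemma sumIccSdiffNoC16 (L M c : ℕ) (h1 : c < L) :
    (∑ n ∈ Finset.Icc L M \ {c}, n) = ∑ n ∈ Finset.Icc L M, n := by
  congr 1
  rw [Finset.sdiff_eq_self_iff_disjoint]
  simp [Finset.disjoint_left, Finset.mem_Icc]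
  omega

/-- the gap pieces -/
def gp16 (a k : ℕ) : Finset ℕ := Finset.Icc ((a+5)*k+1) (a*(k+1)+2) \ {a*(k+1)}

lemma gp16_mem {a k n : ℕ} : n ∈ gp16 a k ↔ ((a+5)*k+1 ≤ n ∧ n ≤ a*(k+1)+2 ∧ n ≠ a*(k+1)) := by
  simp [gp16, Finset.mem_Icc]
  tauto

lemma gp16_disj (a : ℕ) {i j : ℕ} (hij : i ≠ j) : Disjoint (gp16 a i) (gp16 a j) := by
  have key : ∀ i j : ℕ, i < j → Disjoint (gp16 a i) (gp16 a j) := by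
    intro i j h
    rw [Finset.disjoint_left]
    intro n hi hj
    rw [gp16_mem] at hi hj
    have h1 : (a+5)*(i+1) ≤ (a+5)*j := Nat.mul_le_mul_left _ (by omega)
    have e1 : (a+5)*(i+1) = a*(i+1) + 5*i + 5 := by ring
    omega
  rcases lt_or_gt_of_ne hij with h | h
  · exact key _ _ h
  · exact (key _ _ h).symm

lemma gp16_piece_val (a k : ℕ) (hk : 5 * k < a) :
    2 * ((∑ n ∈ gp16 a k, n : ℕ) : ℤ)
      = (2*(a:ℤ)*k + 5*k + a + 3) * ((a:ℤ) + 2 - 5*k) - 2*(a:ℤ)*(k+1) := by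
  have e1 : (a+5)*k = a*k + 5*k := by ring
  have e2 : a*(k+1) = a*k + a := by ring
  have h := sumIccSdiff16 ((a+5)*k+1) (a*(k+1)+2) (a*(k+1)) (by omega) (by omega)
  rw [show a*(k+1)+2+1 - ((a+5)*k+1) = a + 2 - 5*k by omega,
      show (a+5)*k+1 + (a*(k+1)+2) = 2*(a*k) + 5*k + a + 3 by omega] at h
  have hcast : ((a + 2 - 5*k : ℕ) : ℤ) = (a:ℤ) + 2 - 5*k := by
    push_cast [Nat.cast_sub (by omega : 5*k ≤ a + 2)]; ring
  unfold gp16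
  zify at h
  push_cast at h ⊢
  rw [hcast] at h
  linear_combination h

lemma sumPoly16 (A : ℤ) : ∀ N : ℕ,
    6 * ∑ k ∈ Finset.range N, ((2*A*(k:ℤ) + 5*(k:ℤ) + A + 3) * (A + 2 - 5*(k:ℤ)) - 2*A*((k:ℤ)+1))
      = -(10*A+25)*((N:ℤ)-1)*(N:ℤ)*(2*(N:ℤ)-1) + 3*(2*A^2+2*A-5)*(N:ℤ)*((N:ℤ)-1)
        + 6*(A^2+3*A+6)*(N:ℤ) := by
  intro N
  induction N with
  | zero => simp
  | succ N ih =>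
    rw [Finset.sum_range_succ, mul_add, ih]
    push_cast
    ring

lemma repAux16 (a q t : ℕ) (h3 : 3 ≤ t) (h5 : t ≤ 5 * q) :
    ∃ w x y z : ℕ, a * q + t = a * w + (a + 3) * x + (a + 4) * y + (a + 5) * z := by
  set p := (t + 4) / 5 with hp
  have hp3 : 3 * p ≤ t := by omega
  have hp5 : t ≤ 5 * p := by omega
  have hpq : p ≤ q := by omega
  refine ⟨q - p, p - ((t - 3*p)/2 + (t - 3*p) % 2), (t - 3*p) % 2, (t - 3*p)/2, ?_⟩
  set y := (t - 3*p) % 2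
  set z := (t - 3*p) / 2
  set x := p - (z + y) with hx
  have hsum : x + y + z = p := by omega
  have hval : 3 * x + 4 * y + 5 * z = t := by omega
  have hq : q = (q - p) + (x + y + z) := by omega
  calc a * q + t = a * ((q - p) + (x + y + z)) + (3 * x + 4 * y + 5 * z) := by
        rw [← hq, hval]
    _ = a * (q - p) + (a + 3) * x + (a + 4) * y + (a + 5) * z := by ring

lemma forwardChar16 (a n : ℕ) (ha : 3 ≤ a) (hn : 0 < n)
    (hnr : ¬ ∃ w x y z : ℕ, n = a * w + (a + 3) * x + (a + 4) * y + (a + 5) * z) :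
    ∃ k, 5 * k ≤ a + 1 ∧ (a + 5) * k + 1 ≤ n ∧ n ≤ a * (k + 1) + 2 ∧ n ≠ a * (k + 1) := by
  by_cases hn3 : n < 3
  · exact ⟨0, by omega, by omega, by omega, by omega⟩
  push_neg at hn3
  set q := (n - 3) / a with hq
  set s := (n - 3) % a with hs
  have hsa : s < a := Nat.mod_lt _ (by omega)
  have hnq : n = a * q + (s + 3) := by
    have h := Nat.div_add_mod (n - 3) a
    rw [← hq, ← hs] at h
    omega
  have h5q : ¬ (s + 3 ≤ 5 * q) := by
    intro h
    obtain ⟨w, x, y, z, hw⟩ := repAux16 a q (s + 3) (by omega) h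
    exact hnr ⟨w, x, y, z, by omega⟩
  have hnd : ¬ (a ∣ n) := by
    rintro ⟨w, hw⟩
    exact hnr ⟨w, 0, 0, 0, by simpa using hw⟩
  refine ⟨q, by omega, ?_, ?_, ?_⟩
  · have : (a + 5) * q = a * q + 5 * q := by ring
    omega
  · have : a * (q + 1) = a * q + a := by ring
    omega
  · intro h; exact hnd ⟨q + 1, h⟩

lemma backwardChar16 (a k n : ℕ) (ha : 3 ≤ a)
    (h1 : (a + 5) * k + 1 ≤ n) (h2 : n ≤ a * (k + 1) + 2) (h3 : n ≠ a * (k + 1)) :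
    ¬ ∃ w x y z : ℕ, n = a * w + (a + 3) * x + (a + 4) * y + (a + 5) * z := by
  rintro ⟨w, x, y, z, h⟩
  have e1 : (a + 5) * k = a * k + 5 * k := by ring
  have e2 : a * (k + 1) = a * k + a := by ring
  rw [e1] at h1; rw [e2] at h2 h3
  by_cases hxyz : x + y + z = 0
  · have hx : x = 0 := by omega
    have hy : y = 0 := by omega
    have hz : z = 0 := by omega
    subst hx hy hz
    simp at h
    rcases Nat.lt_or_ge w (k + 1) with hw | hw
    · have : a * w ≤ a * k := Nat.mul_le_mul_left a (by omega)
      omega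
    rcases Nat.lt_or_ge w (k + 2) with hw2 | hw2
    · have hwk : w = k + 1 := by omega
      rw [hwk] at h
      have : a * (k + 1) = a * k + a := by ring
      omega
    · have : a * (k + 2) ≤ a * w := Nat.mul_le_mul_left a hw2
      have e3 : a * (k + 2) = a * k + 2 * a := by ring
      omega
  · have hjn : n = a * (w + x + y + z) + (3 * x + 4 * y + 5 * z) := by rw [h]; ring
    set j := w + x + y + z with hj
    rcases le_or_gt j k with hjk | hjk
    · have : a * j ≤ a * k := Nat.mul_le_mul_left a hjk
      omega
    · have : a * (k + 1) ≤ a * j := Nat.mul_le_mul_left a hjk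
      have e3 : a * (k + 1) = a * k + a := by ring
      omega

lemma sumPieces16 (a : ℕ) (ha : 3 ≤ a) :
    (∑ᶠ n ∈ {n : ℕ | 0 < n ∧
        ¬ ∃ w x y z : ℕ, n = a * w + (a + 3) * x + (a + 4) * y + (a + 5) * z}, n)
      = ∑ k ∈ Finset.range ((a+1)/5 + 1), ∑ n ∈ gp16 a k, n := by
  have hset : {n : ℕ | 0 < n ∧
      ¬ ∃ w x y z : ℕ, n = a * w + (a + 3) * x + (a + 4) * y + (a + 5) * z}
      = ↑((Finset.range ((a+1)/5 + 1)).biUnion (gp16 a)) := by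
    ext n
    simp only [Set.mem_setOf_eq, Finset.coe_biUnion, Set.mem_iUnion, Finset.mem_coe,
      Finset.mem_range]
    constructor
    · rintro ⟨hn, hnr⟩
      obtain ⟨k, hk, h1, h2, h3⟩ := forwardChar16 a n ha hn hnr
      exact ⟨k, by omega, gp16_mem.2 ⟨h1, h2, h3⟩⟩
    · rintro ⟨k, hk, hmem⟩
      rw [gp16_mem] at hmem
      exact ⟨by omega, backwardChar16 a k n ha hmem.1 hmem.2.1 hmem.2.2⟩
  rw [hset, finsum_mem_coe_finset, Finset.sum_biUnion (fun i _ j _ hij => gp16_disj a hij)]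

lemma sumPiecesZ16 (a N : ℕ) (h : ∀ k < N, 5 * k < a) :
    12 * ((∑ k ∈ Finset.range N, ∑ n ∈ gp16 a k, n : ℕ) : ℤ)
      = -(10*(a:ℤ)+25)*((N:ℤ)-1)*(N:ℤ)*(2*(N:ℤ)-1) + 3*(2*(a:ℤ)^2+2*(a:ℤ)-5)*(N:ℤ)*((N:ℤ)-1)
        + 6*((a:ℤ)^2+3*(a:ℤ)+6)*(N:ℤ) := by
  have h6 := sumPoly16 (a : ℤ) N
  have hc : ∑ k ∈ Finset.range N,
      ((2*(a:ℤ)*(k:ℤ) + 5*(k:ℤ) + (a:ℤ) + 3) * ((a:ℤ) + 2 - 5*(k:ℤ)) - 2*(a:ℤ)*((k:ℤ)+1))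
      = ∑ k ∈ Finset.range N, 2 * ((∑ n ∈ gp16 a k, n : ℕ) : ℤ) :=
    Finset.sum_congr rfl (fun k hk => (gp16_piece_val a k (h k (Finset.mem_range.1 hk))).symm)
  rw [hc, ← Finset.mul_sum] at h6
  push_cast at h6 ⊢
  linarith [h6]

theorem stmt16 (a : ℕ) (ha : 3 ≤ a) :
    (a % 5 = 0 → (∑ᶠ n ∈ {n : ℕ | 0 < n ∧
        ¬ ∃ w x y z : ℕ, n = a * w + (a + 3) * x + (a + 4) * y + (a + 5) * z}, n)
        = (a + 5) * (a ^ 3 + 8 * a ^ 2 + 55 * a + 90) / 150) ∧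
    (a % 5 = 1 → (∑ᶠ n ∈ {n : ℕ | 0 < n ∧
        ¬ ∃ w x y z : ℕ, n = a * w + (a + 3) * x + (a + 4) * y + (a + 5) * z}, n)
        = (a + 4) * (a ^ 3 + 9 * a ^ 2 + 35 * a + 105) / 150) ∧
    (a % 5 = 2 → (∑ᶠ n ∈ {n : ℕ | 0 < n ∧
        ¬ ∃ w x y z : ℕ, n = a * w + (a + 3) * x + (a + 4) * y + (a + 5) * z}, n)
        = (a + 3) * (a ^ 3 + 10 * a ^ 2 + 41 * a + 110) / 150) ∧
    (a % 5 = 3 → (∑ᶠ n ∈ {n : ℕ | 0 < n ∧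
        ¬ ∃ w x y z : ℕ, n = a * w + (a + 3) * x + (a + 4) * y + (a + 5) * z}, n)
        = (a + 2) * (a ^ 3 + 11 * a ^ 2 + 43 * a + 105) / 150) ∧
    (a % 5 = 4 → (∑ᶠ n ∈ {n : ℕ | 0 < n ∧
        ¬ ∃ w x y z : ℕ, n = a * w + (a + 3) * x + (a + 4) * y + (a + 5) * z}, n)
        = (a + 6) * (a ^ 3 + 7 * a ^ 2 + 41 * a + 65) / 150) := by
  refine ⟨?_, ?_, ?_, ?_, ?_⟩
  · -- r = 0
    intro hr
    obtain ⟨m, rfl⟩ : ∃ m, a = 5 * m := ⟨a / 5, by omega⟩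
    have hm1 : 1 ≤ m := by omega
    rw [sumPieces16 _ ha, show (5*m+1)/5 + 1 = m + 1 by omega, Finset.sum_range_succ]
    have hz := sumPiecesZ16 (5*m) m (fun k hk => by omega)
    have hlast : (∑ n ∈ gp16 (5*m) m, n) * 2 = 2 * (2*((5*m+5)*m+1)+1) := by
      unfold gp16
      rw [sumIccSdiffNoC16 _ _ _ (by nlinarith)]
      rw [show (5*m)*(m+1)+2 = ((5*m+5)*m+1) + 1 by ring]
      exact gaussIcc16 1 _
    have h2 : ((5*m+5) * ((5*m)^3 + 8*(5*m)^2 + 55*(5*m) + 90) : ℤ)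
        = 150 * (((∑ k ∈ Finset.range m, ∑ n ∈ gp16 (5*m) k, n) + ∑ n ∈ gp16 (5*m) m, n : ℕ) : ℤ) := by
      have hlz : ((∑ n ∈ gp16 (5*m) m, n : ℕ) : ℤ) * 2 = 2 * (2*((5*(m:ℤ)+5)*m+1)+1) := by
        exact_mod_cast hlast
      push_cast at hz hlz ⊢
      linarith [hz, hlz]
    have h3 : (5*m+5) * ((5*m)^3 + 8*(5*m)^2 + 55*(5*m) + 90)
        = 150 * ((∑ k ∈ Finset.range m, ∑ n ∈ gp16 (5*m) k, n) + ∑ n ∈ gp16 (5*m) m, n) := by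
      exact_mod_cast h2
    omega
  · -- r = 1
    intro hr
    obtain ⟨m, rfl⟩ : ∃ m, a = 5 * m + 1 := ⟨a / 5, by omega⟩
    rw [sumPieces16 _ ha, show (5*m+1+1)/5 + 1 = m + 1 by omega]
    have hz := sumPiecesZ16 (5*m+1) (m+1) (fun k hk => by omega)
    have h2 : ((5*m+1+4) * ((5*m+1)^3 + 9*(5*m+1)^2 + 35*(5*m+1) + 105) : ℤ)
        = 150 * ((∑ k ∈ Finset.range (m+1), ∑ n ∈ gp16 (5*m+1) k, n : ℕ) : ℤ) := by
      push_cast at hz ⊢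
      linarith [hz]
    have h3 : (5*m+1+4) * ((5*m+1)^3 + 9*(5*m+1)^2 + 35*(5*m+1) + 105)
        = 150 * ∑ k ∈ Finset.range (m+1), ∑ n ∈ gp16 (5*m+1) k, n := by exact_mod_cast h2
    omega
  · -- r = 2
    intro hr
    obtain ⟨m, rfl⟩ : ∃ m, a = 5 * m + 2 := ⟨a / 5, by omega⟩
    rw [sumPieces16 _ ha, show (5*m+2+1)/5 + 1 = m + 1 by omega]
    have hz := sumPiecesZ16 (5*m+2) (m+1) (fun k hk => by omega)
    have h2 : ((5*m+2+3) * ((5*m+2)^3 + 10*(5*m+2)^2 + 41*(5*m+2) + 110) : ℤ)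
        = 150 * ((∑ k ∈ Finset.range (m+1), ∑ n ∈ gp16 (5*m+2) k, n : ℕ) : ℤ) := by
      push_cast at hz ⊢
      linarith [hz]
    have h3 : (5*m+2+3) * ((5*m+2)^3 + 10*(5*m+2)^2 + 41*(5*m+2) + 110)
        = 150 * ∑ k ∈ Finset.range (m+1), ∑ n ∈ gp16 (5*m+2) k, n := by exact_mod_cast h2
    omega
  · -- r = 3
    intro hr
    obtain ⟨m, rfl⟩ : ∃ m, a = 5 * m + 3 := ⟨a / 5, by omega⟩
    rw [sumPieces16 _ ha, show (5*m+3+1)/5 + 1 = m + 1 by omega]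
    have hz := sumPiecesZ16 (5*m+3) (m+1) (fun k hk => by omega)
    have h2 : ((5*m+3+2) * ((5*m+3)^3 + 11*(5*m+3)^2 + 43*(5*m+3) + 105) : ℤ)
        = 150 * ((∑ k ∈ Finset.range (m+1), ∑ n ∈ gp16 (5*m+3) k, n : ℕ) : ℤ) := by
      push_cast at hz ⊢
      linarith [hz]
    have h3 : (5*m+3+2) * ((5*m+3)^3 + 11*(5*m+3)^2 + 43*(5*m+3) + 105)
        = 150 * ∑ k ∈ Finset.range (m+1), ∑ n ∈ gp16 (5*m+3) k, n := by exact_mod_cast h2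
    omega
  · -- r = 4
    intro hr
    obtain ⟨m, rfl⟩ : ∃ m, a = 5 * m + 4 := ⟨a / 5, by omega⟩
    rw [sumPieces16 _ ha, show (5*m+4+1)/5 + 1 = m + 2 by omega, Finset.sum_range_succ]
    have hz := sumPiecesZ16 (5*m+4) (m+1) (fun k hk => by omega)
    have hlast : (∑ n ∈ gp16 (5*m+4) (m+1), n) = (5*m+9)*(m+1)+1 := by
      unfold gp16
      rw [sumIccSdiffNoC16 _ _ _ (by nlinarith)]
      rw [show (5*m+4)*(m+1+1)+2 = (5*m+9)*(m+1)+1 by ring, Finset.Icc_self,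
        Finset.sum_singleton]
    have h2 : ((5*m+4+6) * ((5*m+4)^3 + 7*(5*m+4)^2 + 41*(5*m+4) + 65) : ℤ)
        = 150 * (((∑ k ∈ Finset.range (m+1), ∑ n ∈ gp16 (5*m+4) k, n) + ∑ n ∈ gp16 (5*m+4) (m+1), n : ℕ) : ℤ) := by
      have hlz : ((∑ n ∈ gp16 (5*m+4) (m+1), n : ℕ) : ℤ) = (5*(m:ℤ)+9)*(m+1)+1 := by
        exact_mod_cast hlast
      push_cast at hz hlz ⊢
      linarith [hz, hlz]
    have h3 : (5*m+4+6) * ((5*m+4)^3 + 7*(5*m+4)^2 + 41*(5*m+4) + 65)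
        = 150 * ((∑ k ∈ Finset.range (m+1), ∑ n ∈ gp16 (5*m+4) k, n) + ∑ n ∈ gp16 (5*m+4) (m+1), n) := by
      exact_mod_cast h2
    omega
end

section
/- For every integer a with a = 5, 6, 7, 8 or a ≥ 10, the Frobenius number of {a, a+5, a+6, a+7} equals (2 + ⌊(a+1)/7⌋)·a + 9. -/
/-- Any `m` with `10 ≤ m ≤ 7k` is a sum `5x+6y+7z` with at most `k` parts. -/
lemma aux567 (m : ℕ) : ∀ k : ℕ, 10 ≤ m → m ≤ 7 * k →
    ∃ x y z : ℕ, x + y + z ≤ k ∧ m = 5 * x + 6 * y + 7 * z := by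
  induction m using Nat.strong_induction_on with
  | _ m ih =>
    intro k h10 h7k
    by_cases h17 : m ≤ 16
    · interval_cases m
      · exact ⟨2, 0, 0, by omega, by norm_num⟩
      · exact ⟨1, 1, 0, by omega, by norm_num⟩
      · exact ⟨0, 2, 0, by omega, by norm_num⟩
      · exact ⟨0, 1, 1, by omega, by norm_num⟩
      · exact ⟨0, 0, 2, by omega, by norm_num⟩
      · exact ⟨3, 0, 0, by omega, by norm_num⟩
      · exact ⟨2, 1, 0, by omega, by norm_num⟩
    · obtain ⟨x, y, z, hle, heq⟩ := ih (m - 7) (by omega) (k - 1) (by omega) (by omega)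
      exact ⟨x, y, z + 1, by omega, by omega⟩

theorem stmt17 (a : ℕ) (ha : a = 5 ∨ a = 6 ∨ a = 7 ∨ a = 8 ∨ 10 ≤ a) :
    IsGreatest {n : ℕ | 0 < n ∧
        ¬ ∃ w x y z : ℕ, n = a * w + (a + 5) * x + (a + 6) * y + (a + 7) * z}
      ((2 + (a + 1) / 7) * a + 9) := by
  have ha5 : 5 ≤ a := by omega
  have ha9 : a ≠ 9 := by omega
  set q := (a + 1) / 7 with hqdef
  have hdm := Nat.div_add_mod (a + 1) 7
  have hmlt : (a + 1) % 7 < 7 := Nat.mod_lt _ (by norm_num)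
  have hq1 : 7 * q ≤ a + 1 := by omega
  have hq2 : a + 1 ≤ 7 * q + 6 := by omega
  constructor
  · -- membership: positive and not representable
    constructor
    · exact lt_of_lt_of_le (by norm_num) (Nat.le_add_left 9 _)
    · rintro ⟨w, x, y, z, h⟩
      obtain ⟨k, s, m, hs1, hs2, hsk, key⟩ :
          ∃ k s m : ℕ, 5 * s ≤ m ∧ m ≤ 7 * s ∧ s ≤ k ∧ a * (2 + q) + 9 = a * k + m := by
        refine ⟨w + x + y + z, x + y + z, 5 * x + 6 * y + 7 * z, by omega, by omega,
          by omega, ?_⟩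
        rw [show a * (2 + q) = (2 + q) * a from mul_comm _ _, h]; ring
      rcases Nat.lt_trichotomy k (2 + q) with hlt | heq | hgt
      · -- k < 2+q : then m = a*(2+q-k)+9 ≥ a+9 > 7k ≥ m
        have h1 : a * (k + 1) ≤ a * (2 + q) := Nat.mul_le_mul_left a (by omega)
        have h2 : a * (k + 1) = a * k + a := by ring
        -- from key : a*k + m = a*(2+q)+9 ≥ a*k + a + 9, so m ≥ a+9
        have h3 : a + 9 ≤ m := by
          have := key
          nlinarith
        have h4 : m ≤ 7 * k := by omega
        -- a+9 ≤ 7k ≤ 7(1+q) ≤ 7 + a + 1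
        omega
      · -- k = 2+q : then m = 9, impossible as 5s ≤ 9 ≤ 7s has no solution
        rw [heq] at key
        have hm9 : m = 9 := by omega
        omega
      · -- k > 2+q
        have h1 : a * (3 + q) ≤ a * k := Nat.mul_le_mul_left a (by omega)
        have h2 : a * (3 + q) = a * (2 + q) + a := by ring
        have h3 : a + m ≤ 9 := by nlinarith
        -- so a ≤ 8, hence m ≤ 4, forcing s = 0 and m = 0
        have hm0 : m = 0 := by omega
        -- then a*(2+q) + 9 = a*k with k ≥ 3+q
        obtain ⟨e, he⟩ : ∃ e, k = (2 + q) + e := ⟨k - (2 + q), by omega⟩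
        have he1 : 1 ≤ e := by omega
        rw [he] at key
        have h4 : a * ((2 + q) + e) = a * (2 + q) + a * e := by ring
        have h5 : a * e = 9 := by omega
        have h6 : a ≤ a * e := Nat.le_mul_of_pos_right a (by omega)
        have hub : a ≤ 9 := by omega
        interval_cases a <;> omega
  · -- upper bound
    rintro n ⟨hn, hnr⟩
    by_contra hle
    push_neg at hle
    have hF : (2 + q) * a + 10 ≤ n := by omega
    exfalso
    apply hnr
    have ha0 : 0 < a := by omega
    have h10n : 10 ≤ n := by
      have : 10 ≤ (2 + q) * a + 10 := Nat.le_add_left _ _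
      omega
    obtain ⟨k, r, hr, hkey, hKk⟩ :
        ∃ k r : ℕ, r < a ∧ n = a * k + r + 10 ∧ 2 + q ≤ k := by
      refine ⟨(n - 10) / a, (n - 10) % a, Nat.mod_lt _ ha0, ?_, ?_⟩
      · have h := Nat.div_add_mod (n - 10) a
        calc n = n - 10 + 10 := (Nat.sub_add_cancel h10n).symm
        _ = a * ((n - 10) / a) + (n - 10) % a + 10 := by rw [h]
      · refine (Nat.le_div_iff_mul_le ha0).2 ?_
        have : (2 + q) * a ≤ n - 10 := Nat.le_sub_of_add_le hF
        omega
    -- m := r + 10 satisfies 10 ≤ m ≤ 7k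
    have hm7k : r + 10 ≤ 7 * k := by omega
    obtain ⟨x, y, z, hle', heq⟩ := aux567 (r + 10) k (by omega) hm7k
    refine ⟨k - (x + y + z), x, y, z, ?_⟩
    have hw : k = (k - (x + y + z)) + (x + y + z) := by omega
    have hfin : a * ((k - (x + y + z)) + (x + y + z)) + (r + 10) =
        a * (k - (x + y + z)) + (a + 5) * x + (a + 6) * y + (a + 7) * z := by
      rw [heq]; ring
    calc n = a * k + r + 10 := hkey
    _ = a * ((k - (x + y + z)) + (x + y + z)) + (r + 10) := by rw [← hw]; ring
    _ = _ := hfin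
end

section
/- For every integer a ≥ 8, the Frobenius number of {a, a+4, a+5, a+6} equals (2 + ⌊a/6⌋)·a + 7. -/
theorem stmt18 (a : ℕ) (ha : 8 ≤ a) :
    IsGreatest {n : ℕ | 0 < n ∧
        ¬ ∃ w x y z : ℕ, n = a * w + (a + 4) * x + (a + 5) * y + (a + 6) * z}
      ((2 + a / 6) * a + 7) := by
  constructor
  · refine ⟨by positivity, ?_⟩
    rintro ⟨w, x, y, z, h⟩
    set K := 2 + a / 6 with hKdef
    have hK1 : a + 7 ≤ 6 * K ∧ 6 * K ≤ a + 12 := by omega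
    have h' : a * K + 7 = a * (w + x + y + z) + (4 * x + 5 * y + 6 * z) := by
      have e : a * K + 7 = K * a + 7 := by ring
      rw [e, h]; ring
    set m := w + x + y + z with hmdef
    set t := 4 * x + 5 * y + 6 * z with htdef
    have htm : t ≤ 6 * m := by omega
    have hm_le : m ≤ K := by
      by_contra hc
      push_neg at hc
      have h1 : a * (K + 1) ≤ a * m := Nat.mul_le_mul_left a hc
      have e2 : a * (K + 1) = a * K + a := by ring
      linarith [Nat.zero_le t]
    have hsub : a * m + a * (K - m) = a * K := by
      rw [← Nat.mul_add, Nat.add_sub_cancel' hm_le]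
    have ht : t = a * (K - m) + 7 := by linarith
    rcases Nat.eq_zero_or_pos (K - m) with h0 | h0
    · rw [h0, Nat.mul_zero] at ht
      omega
    · have hge : a ≤ a * (K - m) := Nat.le_mul_of_pos_right a h0
      have hmK : m + 1 ≤ K := by omega
      linarith
  · intro n hn
    obtain ⟨hpos, hrep⟩ := hn
    by_contra hgt
    push_neg at hgt
    exfalso
    apply hrep
    set K := 2 + a / 6 with hKdef
    have hK1 : a + 7 ≤ 6 * K ∧ 6 * K ≤ a + 12 := by omega
    have ha0 : 0 < a := by omega
    have hn' : a * K + 8 ≤ n := by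
      have e : K * a = a * K := Nat.mul_comm _ _
      rw [e] at hgt
      omega
    have h8 : 8 ≤ n := by linarith [Nat.zero_le (a * K)]
    set m := (n - 8) / a with hmdef
    have hdm : a * m + (n - 8) % a = n - 8 := Nat.div_add_mod _ _
    have hrem : (n - 8) % a < a := Nat.mod_lt _ ha0
    set r := (n - 8) % a with hrdef
    have hmK : K ≤ m := by
      rw [hmdef, Nat.le_div_iff_mul_le ha0, Nat.le_sub_iff_add_le h8, Nat.mul_comm]
      exact hn'
    -- t = r + 8 satisfies 8 ≤ t ≤ a + 7 ≤ 6K ≤ 6m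
    have ht6m : r + 8 ≤ 6 * m := by linarith
    -- choose j parts summing to t
    set t := r + 8 with htdef
    set j := (t + 5) / 6 with hjdef
    have hj : 4 * j ≤ t ∧ t ≤ 6 * j ∧ 6 * j ≤ t + 5 := by omega
    have hjm : j ≤ m := by omega
    set d := t - 4 * j with hddef
    set z := d / 2 with hzdef
    set y := d % 2 with hydef
    have hyz : y + z ≤ j := by omega
    refine ⟨m - j, j - y - z, y, z, ?_⟩
    have e1 : (m - j) + (j - y - z) + y + z = m := by omega
    have e2 : 4 * (j - y - z) + 5 * y + 6 * z = t := by omega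
    have e0 : a * (m - j) + (a + 4) * (j - y - z) + (a + 5) * y + (a + 6) * z
        = a * ((m - j) + (j - y - z) + y + z) + (4 * (j - y - z) + 5 * y + 6 * z) := by
      ring
    rw [e0, e1, e2]
    have : a * m + t = (n - 8) + 8 := by
      rw [htdef, ← hdm]; ring
    rw [this, Nat.sub_add_cancel h8]
end

section
/- For every integer a with a ∈ {4, 5, 6} or a ≥ 8, the number of positive integers not representable by a, a+4, a+5, a+6 equals (a²+12a+48)/12 if a ≡ 0 (mod 6), (a²+12a+35)/12 if a ≡ 1 or 5 (mod 6), (a²+12a+32)/12 if a ≡ 2 or 4 (mod 6), and (a²+12a+27)/12 if a ≡ 3 (mod 6). -/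
/-!
A sum of `m` generators is `a * m + t` with `t` a sum of `m` elements of `{0, 4, 5, 6}`, and
since the gaps of `⟨4, 5, 6⟩` are `1, 2, 3, 7`, such `t` are exactly those `t ≤ 6 * m` outside
`{1, 2, 3, 7}`. So the least element of the semigroup congruent to `r` mod `a` is `a * q_r + r`
with `q_r = ⌈r / 6⌉` if `r` is not a gap of `⟨4, 5, 6⟩`, and `q_r = ⌈(r + a + 6) / 6⌉` if it is
(for `a ≥ 8`; for smaller `a` the shift `r + a` may again be a gap). The number of gaps is then
Selmer's sum `∑ r < a, q_r`, a quadratic in `a` depending on `a mod 6`.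
-/

open Finset

theorem ncard_compl_eq_sum_range {S : Set ℕ} {a : ℕ} (ha : 0 < a) (m : ℕ → ℕ)
    (hm : ∀ r < a, ∀ q, a * q + r ∈ S ↔ m r ≤ q) :
    Sᶜ.ncard = ∑ r ∈ range a, m r := by
  have hS : Sᶜ = ↑(((range a).sigma fun r => range (m r)).image fun p => a * p.2 + p.1) := by
    ext n
    simp only [Set.mem_compl_iff, coe_image, Set.mem_image, mem_coe, mem_sigma, mem_range,
      Sigma.exists]
    constructor
    · intro hn
      refine ⟨n % a, n / a, ⟨Nat.mod_lt n ha, ?_⟩, Nat.div_add_mod n a⟩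
      by_contra! h
      exact hn (Nat.div_add_mod n a ▸ (hm _ (Nat.mod_lt n ha) _).2 h)
    · rintro ⟨r, q, ⟨hr, hq⟩, rfl⟩
      exact fun h => (hm r hr q).1 h |>.not_gt hq
  rw [hS, Set.ncard_coe_finset, card_image_of_injOn, card_sigma]
  · simp only [card_range]
  · rintro ⟨r, q⟩ hp ⟨r', q'⟩ hp' h
    simp only [coe_sigma, Set.mem_sigma_iff, mem_coe, mem_range] at hp hp' h
    have hqr := (Nat.div_mod_unique ha).2 ⟨add_comm r (a * q), hp.1⟩
    have hqr' := (Nat.div_mod_unique ha).2 ⟨add_comm r' (a * q'), hp'.1⟩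
    rw [h] at hqr
    obtain ⟨rfl, rfl⟩ : r = r' ∧ q = q' := by omega
    rfl

def gaps456 : Finset ℕ := {1, 2, 3, 7}

theorem exists_sum_four_five_six {t s : ℕ} (ht : t ∉ gaps456) (hts : t ≤ 6 * s) :
    ∃ x y z : ℕ, x + y + z ≤ s ∧ 4 * x + 5 * y + 6 * z = t := by
  simp only [gaps456, mem_insert, mem_singleton] at ht
  induction t using Nat.strong_induction_on generalizing s with
  | _ t ih =>
    by_cases hstep : 6 ≤ t ∧ t ≠ 7 ∧ t ≠ 8 ∧ t ≠ 9 ∧ t ≠ 13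
    · obtain ⟨x, y, z, hs, hxyz⟩ := ih (t - 6) (by omega) (s := s - 1) (by omega) (by omega)
      exact ⟨x, y, z + 1, by omega, by omega⟩
    · obtain rfl | rfl | rfl | rfl | rfl | rfl :
          t = 0 ∨ t = 4 ∨ t = 5 ∨ t = 8 ∨ t = 9 ∨ t = 13 := by omega
      exacts [⟨0, 0, 0, by omega, rfl⟩, ⟨1, 0, 0, by omega, rfl⟩, ⟨0, 1, 0, by omega, rfl⟩,
        ⟨2, 0, 0, by omega, rfl⟩, ⟨1, 1, 0, by omega, rfl⟩, ⟨2, 1, 0, by omega, rfl⟩]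

def semigroupOf (a : ℕ) : Set ℕ :=
  {n | ∃ w x y z : ℕ, n = a * w + (a + 4) * x + (a + 5) * y + (a + 6) * z}

theorem mem_semigroupOf_iff {a n : ℕ} :
    n ∈ semigroupOf a ↔ ∃ m t, n = a * m + t ∧ t ≤ 6 * m ∧ t ∉ gaps456 := by
  constructor
  · rintro ⟨w, x, y, z, rfl⟩
    refine ⟨w + x + y + z, 4 * x + 5 * y + 6 * z, by ring, by omega, ?_⟩
    simp only [gaps456, mem_insert, mem_singleton]
    omega
  · rintro ⟨m, t, rfl, htm, ht⟩
    obtain ⟨x, y, z, hm, rfl⟩ := exists_sum_four_five_six ht htm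
    obtain ⟨w, rfl⟩ := Nat.exists_eq_add_of_le' hm
    exact ⟨w, x, y, z, by ring⟩

theorem mul_add_mem_semigroupOf_iff {a q r : ℕ} (hr : r < a) :
    a * q + r ∈ semigroupOf a ↔
      ∃ k m, q = m + k ∧ r + a * k ≤ 6 * m ∧ r + a * k ∉ gaps456 := by
  rw [mem_semigroupOf_iff]
  constructor
  · rintro ⟨m, t, hn, htm, ht⟩
    have hmq : m ≤ q := Nat.lt_succ_iff.1 <| Nat.lt_of_mul_lt_mul_left (a := a)
      (show a * m < a * (q + 1) by rw [mul_add_one]; omega)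
    obtain ⟨k, rfl⟩ := Nat.exists_eq_add_of_le hmq
    have ht' : t = r + a * k := by rw [mul_add] at hn; omega
    exact ⟨k, m, rfl, ht' ▸ htm, ht' ▸ ht⟩
  · rintro ⟨k, m, rfl, htm, ht⟩
    exact ⟨m, r + a * k, by ring, htm, ht⟩

/-- `a * aperyQuot a r + r` is the least element of `semigroupOf a` congruent to `r` mod `a`. -/
def aperyQuot (a r : ℕ) : ℕ :=
  if r ∈ gaps456 then
    if r + a ∈ gaps456 then (r + 2 * a + 17) / 6 else (r + a + 11) / 6
  else (r + 5) / 6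

theorem mul_add_mem_semigroupOf_iff_aperyQuot_le {a q r : ℕ} (ha : 4 ≤ a) (hr : r < a) :
    a * q + r ∈ semigroupOf a ↔ aperyQuot a r ≤ q := by
  rw [mul_add_mem_semigroupOf_iff hr, aperyQuot]
  simp only [gaps456, mem_insert, mem_singleton]
  constructor
  · rintro ⟨k, m, rfl, htm, ht⟩
    rcases k with _ | _ | k
    · split_ifs <;> omega
    · split_ifs <;> omega
    · -- `k = 2` is the weakest of the constraints with `k ≥ 2`
      have : a * 2 ≤ a * (k + 1 + 1) := Nat.mul_le_mul_left a (by omega)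
      split_ifs <;> omega
  · split_ifs <;> intro hq
    · exact ⟨2, q - 2, by omega, by omega, by omega⟩
    · exact ⟨1, q - 1, by omega, by omega, by omega⟩
    · exact ⟨0, q, rfl, by omega, by omega⟩

def genusNumerator (a : ℕ) : ℕ :=
  a ^ 2 + 12 * a + match a % 6 with
    | 0 => 48
    | 1 | 5 => 35
    | 2 | 4 => 32
    | _ => 27

theorem twelve_mul_sum_div_six_add (a : ℕ) :
    12 * (∑ r ∈ range a, (r + 5) / 6 +
        ((a + 12) / 6 + (a + 13) / 6 + (a + 14) / 6 + (a + 18) / 6)) = genusNumerator a + 60 := by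
  induction a with
  | zero => rfl
  | succ a ih =>
    have hsq : (a + 1) ^ 2 = a ^ 2 + 2 * a + 1 := by ring
    have hdiv : ∀ c, (a + c) / 6 = a / 6 + (a % 6 + c) / 6 := fun c => by omega
    rw [sum_range_succ]
    unfold genusNumerator at ih ⊢
    rw [Nat.add_mod a 1 6, hsq]
    obtain h | h | h | h | h | h :
        a % 6 = 0 ∨ a % 6 = 1 ∨ a % 6 = 2 ∨ a % 6 = 3 ∨ a % 6 = 4 ∨ a % 6 = 5 := by omega
    all_goals simp only [add_assoc, Nat.reduceAdd, hdiv, h] at ih ⊢; omega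

theorem sum_aperyQuot_add_five {a : ℕ} (ha : 8 ≤ a) :
    ∑ r ∈ range a, aperyQuot a r + 5 =
      ∑ r ∈ range a, (r + 5) / 6 +
        ((a + 12) / 6 + (a + 13) / 6 + (a + 14) / 6 + (a + 18) / 6) := by
  have hsub : gaps456 ⊆ range a := by
    intro r
    simp only [gaps456, mem_insert, mem_singleton, mem_range]
    omega
  have hgap : ∀ r ∈ gaps456, aperyQuot a r = (r + a + 11) / 6 := by
    intro r hr
    have hra : r + a ∉ gaps456 := by
      simp only [gaps456, mem_insert, mem_singleton]
      omega
    rw [aperyQuot, if_pos hr, if_neg hra]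
  rw [← sum_sdiff hsub, ← sum_sdiff hsub (f := fun r => (r + 5) / 6),
    sum_congr rfl fun r hr => by rw [aperyQuot, if_neg (mem_sdiff.1 hr).2], sum_congr rfl hgap]
  simp only [gaps456, mem_insert, OfNat.one_ne_ofNat, mem_singleton, or_self, not_false_eq_true,
    sum_insert, Nat.reduceEqDiff, sum_singleton, Nat.reduceAdd, Nat.ofNat_pos, Nat.div_self,
    Nat.reduceDiv]
  omega

theorem twelve_mul_ncard_compl_semigroupOf {a : ℕ} (ha : a = 4 ∨ a = 5 ∨ a = 6 ∨ 8 ≤ a) :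
    12 * (semigroupOf a)ᶜ.ncard = genusNumerator a := by
  rw [ncard_compl_eq_sum_range (by omega) (aperyQuot a)
    fun r hr q => mul_add_mem_semigroupOf_iff_aperyQuot_le (by omega) hr]
  rcases ha with rfl | rfl | rfl | ha
  · decide
  · decide
  · decide
  · have := twelve_mul_sum_div_six_add a
    have := sum_aperyQuot_add_five ha
    omega

theorem setOf_pos_not_mem_eq_compl (a : ℕ) :
    {n : ℕ | 0 < n ∧ ¬ ∃ w x y z : ℕ, n = a * w + (a + 4) * x + (a + 5) * y + (a + 6) * z}
      = (semigroupOf a)ᶜ := by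
  ext n
  refine ⟨fun h => h.2, fun h => ⟨Nat.pos_of_ne_zero ?_, h⟩⟩
  rintro rfl
  exact h ⟨0, 0, 0, 0, by ring⟩

theorem stmt19 (a : ℕ) (ha : a = 4 ∨ a = 5 ∨ a = 6 ∨ 8 ≤ a) :
    (a % 6 = 0 → {n : ℕ | 0 < n ∧
        ¬ ∃ w x y z : ℕ, n = a * w + (a + 4) * x + (a + 5) * y + (a + 6) * z}.ncard
        = (a ^ 2 + 12 * a + 48) / 12) ∧
    (a % 6 = 1 ∨ a % 6 = 5 → {n : ℕ | 0 < n ∧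
        ¬ ∃ w x y z : ℕ, n = a * w + (a + 4) * x + (a + 5) * y + (a + 6) * z}.ncard
        = (a ^ 2 + 12 * a + 35) / 12) ∧
    (a % 6 = 2 ∨ a % 6 = 4 → {n : ℕ | 0 < n ∧
        ¬ ∃ w x y z : ℕ, n = a * w + (a + 4) * x + (a + 5) * y + (a + 6) * z}.ncard
        = (a ^ 2 + 12 * a + 32) / 12) ∧
    (a % 6 = 3 → {n : ℕ | 0 < n ∧
        ¬ ∃ w x y z : ℕ, n = a * w + (a + 4) * x + (a + 5) * y + (a + 6) * z}.ncard
        = (a ^ 2 + 12 * a + 27) / 12) := by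
  have key := twelve_mul_ncard_compl_semigroupOf ha
  rw [setOf_pos_not_mem_eq_compl]
  obtain h | h | h | h | h | h :
      a % 6 = 0 ∨ a % 6 = 1 ∨ a % 6 = 2 ∨ a % 6 = 3 ∨ a % 6 = 4 ∨ a % 6 = 5 := by omega
  all_goals
    simp only [genusNumerator, h] at key
    refine ⟨?_, ?_, ?_, ?_⟩ <;> omega
end
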